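/- arXiv:2605.29650 — 2 statements merged into one kernel-verified Lean document; each statement's English description precedes it below -/
import Mathlib

section
/- Let (E,e,T) be a T-universally complete conditional Riesz triple and μ ∈ ba(T)_+. Then: (a) for every f ∈ L^∞(T)_+ and every sequence (s_n) in S_e(T)_+ converging u-uniformly to f for some u ∈ R(T)_+, the sequence (I_μ(s_n)) converges (u·μ(e))-uniformly to ∫ f dμ; and (b) for every f ∈ L^∞(T)_+ there exist u ∈ R(T)_+ and an increasing sequence (s_n) in S_e(T)_+ converging u-uniformly to f. -/
open scoped Classical

noncomputable section

namespace RieszPaper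

universe u v w

/-! ### Basic Riesz space notions -/

section BasicDefs

variable {E : Type u} [Lattice E] [AddCommGroup E]

/-- The positive part `x ⊔ 0`. -/
def rpos (x : E) : E := x ⊔ 0

/-- The set of components of `e`, i.e. elements `p` with `p ⊓ (e - p) = 0`. -/
def Comp (e : E) : Set E := {p | p ⊓ (e - p) = 0}

/-- Disjoint complement of a set. -/
def disjC (S : Set E) : Set E := {x | ∀ y ∈ S, |x| ⊓ |y| = 0}

/-- The principal band generated by `f` (as double disjoint complement). -/
def pBand (f : E) : Set E := disjC (disjC {f})

/-- `e` is a weak order unit: `e > 0` and the band generated by `e` is all of `E`. -/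
def IsWeakUnit (e : E) : Prop := 0 < e ∧ ∀ x : E, 0 ≤ x → x ⊓ e = 0 → x = 0

/-- The chain `x ⊓ n•|f|`, whose supremum is the band projection of `x ≥ 0`
onto the band generated by `f`. -/
def projChain (f x : E) : Set E := {y | ∃ n : ℕ, y = x ⊓ n • |f|}

/-- Band projection of a positive element onto the band generated by `f`. -/
def projP (f x : E) : E := if h : ∃ s, IsLUB (projChain f x) s then h.choose else 0

/-- Band projection onto the principal band generated by `f`. -/
def proj (f x : E) : E := projP f (rpos x) - projP f (rpos (-x))

/-- The principal projection property. -/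
def HasPPP (α : Type u) [Lattice α] [AddCommGroup α] : Prop :=
  ∀ f x : α, 0 ≤ x → ∃ s, IsLUB (projChain f x) s

/-- A subset is sequentially order closed. -/
def SeqOrderClosed (D : Set E) : Prop :=
  (∀ (x : ℕ → E) (l : E), (∀ n, x n ∈ D) → Monotone x → IsLUB (Set.range x) l → l ∈ D) ∧
  (∀ (x : ℕ → E) (l : E), (∀ n, x n ∈ D) → Antitone x → IsGLB (Set.range x) l → l ∈ D)

end BasicDefs

/-! ### Charges on components -/

section Charges

variable {E : Type u} [Lattice E] [AddCommGroup E]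
variable {F : Type v} [Lattice F] [AddCommGroup F]

/-- `μ` is an `F`-valued signed charge on the components of `e`. -/
def IsChargeOn (e : E) (μ : E → F) : Prop :=
  μ 0 = 0 ∧ ∀ p q : E, p ∈ Comp e → q ∈ Comp e → p ⊓ q = 0 → μ (p + q) = μ p + μ q

/-- `μ` is order bounded on the components of `e`. -/
def OrdBddOn (e : E) (μ : E → F) : Prop :=
  ∃ g : F, 0 ≤ g ∧ ∀ p ∈ Comp e, |μ p| ≤ g

/-- `ba(C_e, F)`: order bounded signed `F`-valued charges on the components of `e`. -/
def baSet (e : E) : Set (E → F) := {μ | IsChargeOn e μ ∧ OrdBddOn e μ}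

/-- The order on charges: `μ ≤ ν` iff `ν - μ` is positive on components. -/
def baLe (e : E) (μ ν : E → F) : Prop := ∀ p ∈ Comp e, μ p ≤ ν p

/-- `η` is the least upper bound of `S ⊆ ba(C_e,F)` within `ba(C_e,F)`. -/
def IsLUBba (e : E) (S : Set (E → F)) (η : E → F) : Prop :=
  η ∈ baSet e ∧ (∀ μ ∈ S, baLe e μ η) ∧
    ∀ ξ ∈ baSet e, (∀ μ ∈ S, baLe e μ ξ) → baLe e η ξ

/-- `η` is the greatest lower bound of `S ⊆ ba(C_e,F)` within `ba(C_e,F)`. -/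
def IsGLBba (e : E) (S : Set (E → F)) (η : E → F) : Prop :=
  η ∈ baSet e ∧ (∀ μ ∈ S, baLe e η μ) ∧
    ∀ ξ ∈ baSet e, (∀ μ ∈ S, baLe e ξ μ) → baLe e ξ η

end Charges

section ChargesCCL

variable {E : Type u} [Lattice E] [AddCommGroup E]
variable {F : Type v} [ConditionallyCompleteLattice F] [AddCommGroup F]

/-- Pointwise formula for the supremum of two charges. -/
def chSupAt (e : E) (μ ν : E → F) (p : E) : F :=
  sSup {v | ∃ q, q ∈ Comp e ∧ q ≤ p ∧ v = μ q + ν (p - q)}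

/-- Pointwise formula for the infimum of two charges. -/
def chInfAt (e : E) (μ ν : E → F) (p : E) : F :=
  sInf {v | ∃ q, q ∈ Comp e ∧ q ≤ p ∧ v = μ q + ν (p - q)}

/-- The modulus of a charge, via the Riesz–Kantorovich-type formula. -/
def chargeAbs (e : E) (μ : E → F) : E → F :=
  fun p => sSup {v | ∃ q, q ∈ Comp e ∧ q ≤ p ∧ v = μ q - μ (p - q)}

/-- The positive part of a charge. -/
def chargePos (e : E) (μ : E → F) : E → F :=
  fun p => sSup {v | ∃ q, q ∈ Comp e ∧ q ≤ p ∧ v = μ q}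

/-- The negative part of a charge. -/
def chargeNeg (e : E) (μ : E → F) : E → F :=
  fun p => sSup {v | ∃ q, q ∈ Comp e ∧ q ≤ p ∧ v = -(μ q)}

end ChargesCCL

/-! ### Operators -/

section Ops

variable {E : Type u} [Lattice E] [AddCommGroup E] [Module ℝ E]

def PosOn (Lp : Set E) (φ : E → E) : Prop := ∀ f ∈ Lp, 0 ≤ f → 0 ≤ φ f

def AddOn (Lp : Set E) (φ : E → E) : Prop :=
  ∀ f g : E, f ∈ Lp → g ∈ Lp → φ (f + g) = φ f + φ g

def SmulOn (Lp : Set E) (φ : E → E) : Prop :=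
  ∀ (r : ℝ) (f : E), f ∈ Lp → φ (r • f) = r • φ f

/-- `φ` is a regular operator on `Lp`: a difference of two positive linear maps. -/
def RegularOn (Lp : Set E) (φ : E → E) : Prop :=
  ∃ ψ₁ ψ₂ : E → E, AddOn Lp ψ₁ ∧ AddOn Lp ψ₂ ∧ SmulOn Lp ψ₁ ∧ SmulOn Lp ψ₂ ∧
    PosOn Lp ψ₁ ∧ PosOn Lp ψ₂ ∧ ∀ f ∈ Lp, φ f = ψ₁ f - ψ₂ f

/-- Uniform convergence of a sequence with regulator `u`. -/
def UnifConv (u : E) (s : ℕ → E) (f : E) : Prop :=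
  ∃ ε : ℕ → ℝ, Antitone ε ∧ Filter.Tendsto ε Filter.atTop (nhds 0) ∧
    ∀ n, |f - s n| ≤ ε n • u

end Ops

/-! ### Conditional expectation operators -/

section CondExp

variable {E : Type u} [ConditionallyCompleteLattice E] [AddCommGroup E] [Module ℝ E]

/-- `(E, e, T)` is a conditional Riesz triple: `e` is a weak order unit and `T` is a
strictly positive conditional expectation operator with `T e = e` whose range is a
Dedekind complete Riesz subspace. -/
structure IsCondTriple (e : E) (T : E →ₗ[ℝ] E) : Prop where
  weakUnit : IsWeakUnit e
  pos : ∀ x : E, 0 ≤ x → 0 ≤ T x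
  strictPos : ∀ x : E, 0 < x → 0 < T x
  ordCont : ∀ (A : Set E) (s : E), A.Nonempty → DirectedOn (· ≤ ·) A →
    IsLUB A s → IsLUB (T '' A) (T s)
  idem : ∀ x : E, T (T x) = T x
  unitFix : T e = e
  rangeSupClosed : ∀ x y : E, x ∈ Set.range T → y ∈ Set.range T → x ⊔ y ∈ Set.range T
  rangeDedekind : ∀ A : Set E, A ⊆ Set.range T → A.Nonempty → BddAbove A →
    sSup A ∈ Set.range T

end CondExp

/-! ### Universal completion and T-universal completeness -/

section Univ

variable {E : Type u} {G : Type v}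
variable [ConditionallyCompleteLattice E] [AddCommGroup E] [Module ℝ E]
variable [ConditionallyCompleteLattice G] [AddCommGroup G] [Module ℝ G]

/-- `j : E → G` realizes `G` as a universal completion of `E`. -/
structure IsUnivCompletion (j : E →ₗ[ℝ] G) : Prop where
  bipos : ∀ x : E, 0 ≤ j x ↔ 0 ≤ x
  latHom : ∀ x y : E, j (x ⊔ y) = j x ⊔ j y
  dense : ∀ z : G, 0 < z → ∃ x : E, 0 < j x ∧ j x ≤ z
  univComplete : ∀ S : Set G, (∀ x ∈ S, 0 ≤ x) →
    S.Pairwise (fun a b => a ⊓ b = 0) → BddAbove S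

/-- `E` is `T`-universally complete (relative to the universal completion `j : E → G`):
every nonempty upwards directed subset `A ⊆ E` such that `j[T[A]]` is bounded above in
`G` has a supremum in `E`. -/
def TUnivComplete (T : E →ₗ[ℝ] E) (j : E →ₗ[ℝ] G) : Prop :=
  ∀ A : Set E, A.Nonempty → DirectedOn (· ≤ ·) A →
    BddAbove (⇑j '' (⇑T '' A)) → BddAbove A

end Univ

/-- `mul` is a commutative `f`-algebra multiplication with unit `u`. -/
structure IsFAlgebraMul {G : Type v} [Lattice G] [AddCommGroup G] [Module ℝ G]
    (u : G) (mul : G → G → G) : Prop where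
  comm : ∀ x y, mul x y = mul y x
  assoc : ∀ x y z, mul (mul x y) z = mul x (mul y z)
  add_left : ∀ x y z, mul (x + y) z = mul x z + mul y z
  smul_left : ∀ (r : ℝ) (x y), mul (r • x) y = r • mul x y
  one_mul : ∀ x, mul u x = x
  mul_nonneg : ∀ x y, 0 ≤ x → 0 ≤ y → 0 ≤ mul x y
  disj : ∀ x y z, x ⊓ y = 0 → 0 ≤ z → mul x z ⊓ y = 0

/-! ### Bundled T-universally complete conditional Riesz triples -/

/-- A `T`-universally complete conditional Riesz triple `(E, e, T)`, together with a
universal completion `j : E → G` carrying its `f`-algebra multiplication (with unit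
`j e`).  Since `E = L¹(T)` is an `R(T)`-module, products of elements of `L^∞(T)` with
elements of `E` again lie in `E` (`mulClosed`). -/
structure CRT (E : Type u) (G : Type v)
    [ConditionallyCompleteLattice E] [AddCommGroup E] [Module ℝ E]
    [CovariantClass E E (· + ·) (· ≤ ·)] [PosSMulMono ℝ E]
    [ConditionallyCompleteLattice G] [AddCommGroup G] [Module ℝ G]
    [CovariantClass G G (· + ·) (· ≤ ·)] [PosSMulMono ℝ G] where
  e : E
  T : E →ₗ[ℝ] E
  j : E →ₗ[ℝ] G
  mul : G → G → G
  triple : IsCondTriple e T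
  compl : IsUnivCompletion j
  falg : IsFAlgebraMul (j e) mul
  tuc : TUnivComplete T j
  mulClosed : ∀ f g : E, (∃ h : E, h ∈ Set.range T ∧ 0 ≤ h ∧ |f| ≤ h) →
    mul (j f) (j g) ∈ Set.range ⇑j

namespace CRT

variable {E : Type u} {G : Type v}
variable [ConditionallyCompleteLattice E] [AddCommGroup E] [Module ℝ E]
  [CovariantClass E E (· + ·) (· ≤ ·)] [PosSMulMono ℝ E]
variable [ConditionallyCompleteLattice G] [AddCommGroup G] [Module ℝ G]
  [CovariantClass G G (· + ·) (· ≤ ·)] [PosSMulMono ℝ G]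
variable (C : CRT E G)

/-- The range `R(T)`. -/
def R : Set E := Set.range ⇑C.T

/-- The product `g · f` of two elements of `E = L¹(T)`, computed in the universal
completion (meaningful whenever the product lies again in `E`, e.g. for
`g ∈ R(T)` or `g ∈ L^∞(T)`). -/
def sm (g f : E) : E := @Function.invFun E G ⟨0⟩ (⇑C.j) (C.mul (C.j g) (C.j f))

/-- `L^∞(T) = {f : |f| ≤ g for some g ∈ R(T)₊}`. -/
def Linf : Set E := {f | ∃ h ∈ C.R, 0 ≤ h ∧ |f| ≤ h}

/-- The `R(T)`-valued norm `‖f‖_{T,1} = T |f|`. -/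
def nrm1 (f : E) : E := C.T |f|

/-- The `R(T)`-valued norm `‖f‖_{T,∞} = inf {α ∈ R(T)₊ : |f| ≤ α}`. -/
def nrmInf (f : E) : E := sInf {a | a ∈ C.R ∧ 0 ≤ a ∧ |f| ≤ a}

/-- Order bounded signed `R(T)`-valued charges on the components of `u`. -/
def baR (u : E) : Set (E → E) :=
  {μ | IsChargeOn u μ ∧ (∀ p ∈ Comp u, μ p ∈ C.R) ∧
     ∃ g ∈ C.R, 0 ≤ g ∧ ∀ p ∈ Comp u, |μ p| ≤ g}

/-- `ba(T)`: the `T`-absolutely continuous charges in `ba(C_e, R(T))`. -/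
def baT : Set (E → E) :=
  {μ | μ ∈ C.baR C.e ∧ ∀ p ∈ Comp C.e, μ p ∈ pBand (C.T p)}

/-- `x = ∑ αᵢ pᵢ` is a standard representation of the `e`-step function `x` with
`R(T)`-coefficients. -/
def IsStdRep (x : E) (n : ℕ) (α p : Fin n → E) : Prop :=
  (∀ i, α i ∈ C.R) ∧ (∀ i, p i ∈ Comp C.e) ∧
  (∀ i j, i ≠ j → p i ⊓ p j = 0) ∧ (∑ i, p i) = C.e ∧
  x = ∑ i, C.sm (α i) (p i)

/-- `S_e(T)`: the `e`-step functions with `R(T)`-coefficients. -/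
def Steps : Set E := {x | ∃ (n : ℕ) (α p : Fin n → E), C.IsStdRep x n α p}

/-- The integral `I_μ` of a step function: `I_μ (∑ αᵢ pᵢ) = ∑ αᵢ μ(pᵢ)`. -/
def Imu (μ : E → E) (x : E) : E :=
  @Classical.epsilon E ⟨0⟩ fun v =>
    ∃ (n : ℕ) (α p : Fin n → E), C.IsStdRep x n α p ∧ v = ∑ i, C.sm (α i) (μ (p i))

/-- The integral of a positive element of `L^∞(T)` with respect to a positive charge. -/
def intPos (μ : E → E) (f : E) : E :=
  sSup {v | ∃ g ∈ C.Steps, 0 ≤ g ∧ g ≤ f ∧ v = C.Imu μ g}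

/-- The integral `∫ f dμ = ∫ f⁺ dμ⁺ − ∫ f⁻ dμ⁺ − ∫ f⁺ dμ⁻ + ∫ f⁻ dμ⁻`. -/
def integral (μ : E → E) (f : E) : E :=
  C.intPos (chargePos C.e μ) (rpos f) - C.intPos (chargePos C.e μ) (rpos (-f))
    - C.intPos (chargeNeg C.e μ) (rpos f) + C.intPos (chargeNeg C.e μ) (rpos (-f))

/-- Membership in `L^r(Lp, R(T))`: regular linear operators with values in `R(T)`. -/
structure MemLr (Lp : Set E) (φ : E → E) : Prop where
  add : AddOn Lp φ
  smul : SmulOn Lp φ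
  mem : ∀ f ∈ Lp, φ f ∈ C.R
  regular : RegularOn Lp φ

/-- Membership in the `T`-strong dual of `(Lp, nrm)`: `R(T)`-linear, regular,
`nrm`-bounded maps into `R(T)`. -/
structure MemDual (Lp : Set E) (nrm : E → E) (φ : E → E) : Prop where
  add : AddOn Lp φ
  smul : SmulOn Lp φ
  modHom : ∀ g f : E, g ∈ C.R → f ∈ Lp → φ (C.sm g f) = C.sm g (φ f)
  mem : ∀ f ∈ Lp, φ f ∈ C.R
  regular : RegularOn Lp φ
  bdd : ∃ k ∈ C.R, 0 ≤ k ∧ ∀ f ∈ Lp, |φ f| ≤ C.sm k (nrm f)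

/-- The `R(T)`-valued norm on the `T`-strong dual. -/
def dualNorm (Lp : Set E) (nrm : E → E) (φ : E → E) : E :=
  sInf {g | g ∈ C.R ∧ 0 ≤ g ∧ ∀ f ∈ Lp, |φ f| ≤ C.sm g (nrm f)}

/-- `|φ| ≤ |ψ|` in `L^r(Lp, R(T))`, via the Riesz–Kantorovich formula. -/
def OpAbsLe (Lp : Set E) (φ ψ : E → E) : Prop :=
  ∀ f ∈ Lp, 0 ≤ f → ∀ g ∈ Lp, |g| ≤ f →
    |φ g| ≤ sSup {v | ∃ h, h ∈ Lp ∧ |h| ≤ f ∧ v = |ψ h|}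

/-- The canonical partial inverse of `h` in `R(T)`: the element `g` of the band
generated by `|h|` with `h g = P_{|h|} e`. -/
def pinv (h : E) : E :=
  @Classical.epsilon E ⟨0⟩ fun g =>
    g ∈ C.R ∧ g ∈ pBand (|h|) ∧ C.sm h g = proj (|h|) C.e

end CRT

/-! ### Bundled Dedekind complete Riesz spaces, for existential statements -/

structure BRiesz : Type (u + 1) where
  carrier : Type u
  [ccl : ConditionallyCompleteLattice carrier]
  [grp : AddCommGroup carrier]
  [mod : Module ℝ carrier]
  [cov : CovariantClass carrier carrier (· + ·) (· ≤ ·)]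
  [psm : PosSMulMono ℝ carrier]

attribute [instance] BRiesz.ccl BRiesz.grp BRiesz.mod BRiesz.cov BRiesz.psm

/-- `(F, ẽ, T̃)` together with `i : E → F` is a `T`-universal completion of `(E, e, T)`. -/
structure IsTUnivCompletion
    {E : Type u} [ConditionallyCompleteLattice E] [AddCommGroup E] [Module ℝ E]
    {F : Type v} [ConditionallyCompleteLattice F] [AddCommGroup F] [Module ℝ F]
    (e : E) (T : E →ₗ[ℝ] E) (e' : F) (T' : F →ₗ[ℝ] F) (i : E →ₗ[ℝ] F) : Prop where
  triple : IsCondTriple e' T'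
  tuniv : ∃ (U : BRiesz.{v}) (j : F →ₗ[ℝ] U.carrier),
    IsUnivCompletion j ∧ TUnivComplete T' j
  bipos : ∀ x : E, 0 ≤ i x ↔ 0 ≤ x
  latHom : ∀ x y : E, i (x ⊔ y) = i x ⊔ i y
  dense : ∀ z : F, 0 < z → ∃ x : E, 0 < i x ∧ i x ≤ z
  unit : i e = e'
  comm : ∀ x : E, T' (i x) = i (T x)


/-! ### Powers via functional calculus, for the spaces `L^p(T)` -/

/-- A `T`-universally complete conditional Riesz triple together with the power
functions `x ↦ x^p` (`x ≥ 0`, `p > 0`) of the functional calculus on the universal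
completion. -/
structure CRTP (E : Type u) (G : Type v)
    [ConditionallyCompleteLattice E] [AddCommGroup E] [Module ℝ E]
    [CovariantClass E E (· + ·) (· ≤ ·)] [PosSMulMono ℝ E]
    [ConditionallyCompleteLattice G] [AddCommGroup G] [Module ℝ G]
    [CovariantClass G G (· + ·) (· ≤ ·)] [PosSMulMono ℝ G]
    extends CRT E G where
  epow : G → ℝ → G
  epow_one : ∀ x : G, 0 ≤ x → epow x 1 = x
  epow_nonneg : ∀ (x : G) (p : ℝ), 0 ≤ x → 0 < p → 0 ≤ epow x p
  epow_mono : ∀ (x y : G) (p : ℝ), 0 ≤ x → x ≤ y → 0 < p → epow x p ≤ epow y p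
  epow_unit : ∀ p : ℝ, 0 < p → epow (toCRT.j toCRT.e) p = toCRT.j toCRT.e
  epow_exp_mul : ∀ (x : G) (p q : ℝ), 0 ≤ x → 0 < p → 0 < q →
    epow (epow x p) q = epow x (p * q)
  epow_mul : ∀ (x y : G) (p : ℝ), 0 ≤ x → 0 ≤ y → 0 < p →
    epow (toCRT.mul x y) p = toCRT.mul (epow x p) (epow y p)
  epow_succ : ∀ (x : G) (n : ℕ), 0 ≤ x → 0 < n →
    epow x ((n : ℝ) + 1) = toCRT.mul (epow x (n : ℝ)) x
  epow_sup : ∀ (x y : G) (p : ℝ), 0 ≤ x → 0 ≤ y → 0 < p →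
    epow (x ⊔ y) p = epow x p ⊔ epow y p
  epow_rangeT : ∀ (x : E) (p : ℝ), 0 ≤ x → 0 < p → x ∈ Set.range ⇑toCRT.T →
    epow (toCRT.j x) p ∈ ⇑toCRT.j '' Set.range ⇑toCRT.T

namespace CRTP

variable {E : Type u} {G : Type v}
variable [ConditionallyCompleteLattice E] [AddCommGroup E] [Module ℝ E]
  [CovariantClass E E (· + ·) (· ≤ ·)] [PosSMulMono ℝ E]
variable [ConditionallyCompleteLattice G] [AddCommGroup G] [Module ℝ G]
  [CovariantClass G G (· + ·) (· ≤ ·)] [PosSMulMono ℝ G]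
variable (C : CRTP E G)

/-- the `p`-th power of `x ∈ E`, computed in the universal completion. -/
def powE (x : E) (p : ℝ) : E :=
  @Function.invFun E G ⟨0⟩ (⇑C.toCRT.j) (C.epow (C.toCRT.j x) p)

/-- `L^p(T) = {f ∈ L¹(T) : |f|^p ∈ L¹(T)}` for `p ∈ [1, ∞)`. -/
def LpSet (p : ℝ) : Set E := {f | C.epow (C.toCRT.j |f|) p ∈ Set.range ⇑C.toCRT.j}

/-- The `R(T)`-valued norm `‖f‖_{T,p} = (T |f|^p)^{1/p}`. -/
def nrmP (p : ℝ) (f : E) : E := C.powE (C.toCRT.T (C.powE |f| p)) (1 / p)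

end CRTP


/-!
(a) On step functions `I_μ` is monotone: on a common refinement of two standard
representations the coefficients compare as the functions do, and `T`-absolute continuity of
`μ` carries an inequality `a p ≤ b p` on a component `p` over to `a μ(p) ≤ b μ(p)`. Moreover
`I_μ(s + a) = I_μ(s) + a μ(e)` for `a ∈ R(T)`. Hence every step function `g ≤ f ≤ sₙ + εₙ u`
has `I_μ(g) ≤ I_μ(sₙ) + εₙ u μ(e)`, and the step function `(sₙ - εₙ u)⁺ ≤ f` gives the reverse
estimate.

(b) Choose `h ∈ R(T)` with `f ≤ h` and let `P_{n,k}` be the band projection of `e` onto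
`(f - k 2⁻ⁿ h)⁺`. The step functions `sₙ = ∑ₖ k 2⁻ⁿ h (P_{n,k} - P_{n,k+1})` satisfy
`0 ≤ f - sₙ ≤ 2⁻ⁿ h`, and `sₙ = 2⁻ⁿ h ∑ₖ P_{n,k+1}` increases with `n` because
`P_{n,k} = P_{n+1,2k}`.
-/

instance isOrderedAddMonoid_of_addLeftMono {α : Type*} [AddCommGroup α] [PartialOrder α]
    [AddLeftMono α] : IsOrderedAddMonoid α where
  add_le_add_left _ _ h c := add_le_add_left h c

lemma inf_eq_zero_of_le {α : Type*} [Lattice α] [Zero α] {x y z : α} (hx : 0 ≤ x) (hy : 0 ≤ y)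
    (hyz : y ≤ z) (hxz : x ⊓ z = 0) :
    x ⊓ y = 0 :=
  le_antisymm ((inf_le_inf_left x hyz).trans hxz.le) (le_inf hx hy)

section LatticeGroup

variable {α : Type*} [Lattice α] [AddCommGroup α] [AddLeftMono α] {a b c : α}

lemma inf_sup_left_of_addGroup (a b c : α) : a ⊓ (b ⊔ c) = a ⊓ b ⊔ a ⊓ c :=
  letI := AddCommGroup.toDistribLattice α
  inf_sup_left a b c

lemma inf_sup_right_of_addGroup (a b c : α) : (a ⊔ b) ⊓ c = a ⊓ c ⊔ b ⊓ c :=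
  letI := AddCommGroup.toDistribLattice α
  inf_sup_right a b c

lemma add_eq_sup_of_inf_eq_zero (h : a ⊓ b = 0) : a + b = a ⊔ b := by
  rw [← inf_add_sup, h, zero_add]

lemma inf_add_le_inf_add_inf (ha : 0 ≤ a) (hb : 0 ≤ b) (hc : 0 ≤ c) :
    a ⊓ (b + c) ≤ a ⊓ b + a ⊓ c := by
  rw [inf_add, add_inf, add_inf]
  refine le_inf (le_inf ?_ ?_) (le_inf ?_ inf_le_right)
  · exact inf_le_left.trans (le_add_of_nonneg_right ha)
  · exact inf_le_left.trans (le_add_of_nonneg_right hc)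
  · exact inf_le_left.trans (le_add_of_nonneg_left hb)

lemma inf_nsmul_le_nsmul_inf (ha : 0 ≤ a) (hb : 0 ≤ b) (n : ℕ) :
    a ⊓ n • b ≤ n • (a ⊓ b) := by
  induction n with
  | zero => simp [inf_eq_right.mpr ha]
  | succ n ih =>
    rw [succ_nsmul, succ_nsmul]
    exact (inf_add_le_inf_add_inf ha (nsmul_nonneg hb n) hb).trans (add_le_add_left ih _)

lemma posPart_sub_of_inf_eq_zero (h : a ⊓ b = 0) : (a - b)⁺ = a := by
  rw [posPart_def, ← sub_self b, ← sup_sub, ← add_eq_sup_of_inf_eq_zero h, add_sub_cancel_right]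

lemma inf_sum_le_sum_inf {ι : Type*} (ha : 0 ≤ a) (s : Finset ι) (t : ι → α)
    (ht : ∀ i ∈ s, 0 ≤ t i) : a ⊓ ∑ i ∈ s, t i ≤ ∑ i ∈ s, a ⊓ t i := by
  induction s using Finset.cons_induction with
  | empty => simp [inf_eq_right.mpr ha]
  | cons i s hi ih =>
    rw [Finset.forall_mem_cons] at ht
    rw [Finset.sum_cons, Finset.sum_cons]
    exact (inf_add_le_inf_add_inf ha ht.1 (Finset.sum_nonneg ht.2)).trans
      (add_le_add_right (ih ht.2) _)

lemma inf_sum_eq_zero {ι : Type*} (ha : 0 ≤ a) {s : Finset ι} {t : ι → α}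
    (ht : ∀ i ∈ s, 0 ≤ t i) (hd : ∀ i ∈ s, a ⊓ t i = 0) : a ⊓ ∑ i ∈ s, t i = 0 :=
  le_antisymm ((inf_sum_le_sum_inf ha s t ht).trans (Finset.sum_eq_zero hd).le)
    (le_inf ha (Finset.sum_nonneg ht))

lemma inf_sum_eq_sum_inf {ι : Type*} (ha : 0 ≤ a) (s : Finset ι) (t : ι → α)
    (ht : ∀ i ∈ s, 0 ≤ t i) (hd : (s : Set ι).Pairwise fun i k => t i ⊓ t k = 0) :
    a ⊓ ∑ i ∈ s, t i = ∑ i ∈ s, a ⊓ t i := by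
  induction s using Finset.cons_induction with
  | empty => simp [inf_eq_right.mpr ha]
  | cons i s hi ih =>
    rw [Finset.forall_mem_cons] at ht
    rw [Finset.coe_cons, Set.pairwise_insert] at hd
    have hdisj : t i ⊓ ∑ k ∈ s, t k = 0 :=
      inf_sum_eq_zero ht.1 ht.2 fun k hk => (hd.2 k hk fun h => hi (h ▸ hk)).1
    have hdisj' : a ⊓ t i ⊓ (a ⊓ ∑ k ∈ s, t k) = 0 :=
      le_antisymm ((inf_le_inf inf_le_right inf_le_right).trans hdisj.le)
        (le_inf (le_inf ha ht.1) (le_inf ha (Finset.sum_nonneg ht.2)))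
    rw [Finset.sum_cons, Finset.sum_cons, add_eq_sup_of_inf_eq_zero hdisj,
      inf_sup_left_of_addGroup, ← add_eq_sup_of_inf_eq_zero hdisj', ih ht.2 hd.1]

end LatticeGroup

section DedekindGroup

variable {α : Type*} [ConditionallyCompleteLattice α] [AddCommGroup α] [AddLeftMono α]

lemma nonpos_of_forall_nsmul_le {a b : α} (h : ∀ n : ℕ, n • a ≤ b) : a ≤ 0 := by
  set S := Set.range fun n : ℕ => n • a
  have hS : IsLUB S (sSup S) := isLUB_csSup ⟨0 • a, 0, rfl⟩ ⟨b, by rintro _ ⟨n, rfl⟩; exact h n⟩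
  have hub : sSup S ≤ sSup S - a := hS.2 <| by
    rintro _ ⟨n, rfl⟩
    exact le_sub_iff_add_le.mpr (succ_nsmul a n ▸ hS.1 ⟨n + 1, rfl⟩)
  simpa using hub

lemma isLUB_inf_image {A : Set α} {s : α} (h : IsLUB A s) (x : α) :
    IsLUB ((x ⊓ ·) '' A) (x ⊓ s) := by
  refine ⟨?_, fun t ht => ?_⟩
  · rintro _ ⟨y, hy, rfl⟩
    exact inf_le_inf_left x (h.1 hy)
  · -- `x ⊓ y = x + y - x ⊔ y` turns the bound on `x ⊓ y` into one on `y`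
    have hs : s ≤ t + x ⊔ s - x := h.2 fun y hy => by
      calc y = x ⊓ y + x ⊔ y - x := by rw [inf_add_sup]; abel
        _ ≤ t + x ⊔ s - x :=
          sub_le_sub_right (add_le_add (ht ⟨y, hy, rfl⟩) (sup_le_sup_left (h.1 hy) x)) x
    calc x ⊓ s = x + s - x ⊔ s := by rw [← inf_add_sup x s]; abel
      _ ≤ x + (t + x ⊔ s - x) - x ⊔ s := sub_le_sub_right (add_le_add_right hs x) _
      _ = t := by abel

lemma inf_eq_zero_of_isLUB {A : Set α} {s x : α} (h : IsLUB A s) (hA : A.Nonempty)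
    (hz : ∀ y ∈ A, x ⊓ y = 0) : x ⊓ s = 0 := by
  have himg : (x ⊓ ·) '' A = {0} :=
    Set.eq_singleton_iff_nonempty_unique_mem.mpr
      ⟨hA.image _, by rintro _ ⟨y, hy, rfl⟩; exact hz y hy⟩
  have hlub := isLUB_inf_image h x
  rw [himg] at hlub
  exact hlub.unique isLUB_singleton

end DedekindGroup

namespace Comp

section

variable {α : Type*} [Lattice α] [AddCommGroup α] {e p : α}

lemma nonneg (hp : p ∈ Comp e) : 0 ≤ p := hp ▸ inf_le_left

lemma compl (hp : p ∈ Comp e) : e - p ∈ Comp e := by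
  show (e - p) ⊓ (e - (e - p)) = 0
  rw [sub_sub_cancel, inf_comm]
  exact hp

lemma self (he : 0 ≤ e) : e ∈ Comp e := by
  show e ⊓ (e - e) = 0
  rw [sub_self, inf_eq_right.mpr he]

lemma zero (he : 0 ≤ e) : (0 : α) ∈ Comp e := by
  simpa using compl (self he)

variable [AddLeftMono α] {q : α}

lemma le (hp : p ∈ Comp e) : p ≤ e := sub_nonneg.mp (hp ▸ inf_le_right)

lemma inf (hp : p ∈ Comp e) (hq : q ∈ Comp e) : p ⊓ q ∈ Comp e := by
  have hcompl : e - p ⊓ q = (e - p) ⊔ (e - q) := by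
    rw [sub_eq_add_neg, neg_inf, add_sup, ← sub_eq_add_neg, ← sub_eq_add_neg]
  show p ⊓ q ⊓ (e - p ⊓ q) = 0
  rw [hcompl, inf_sup_left_of_addGroup]
  refine le_antisymm (sup_le ?_ ?_) (le_sup_left.trans' ?_)
  · exact (inf_le_inf_right _ inf_le_left).trans (Eq.le hp)
  · exact (inf_le_inf_right _ inf_le_right).trans (Eq.le hq)
  · exact le_inf (le_inf (nonneg hp) (nonneg hq)) (hp ▸ inf_le_right)

lemma add (hp : p ∈ Comp e) (hq : q ∈ Comp e) (hpq : p ⊓ q = 0) : p + q ∈ Comp e := by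
  have hcompl : e - p ⊔ q = (e - p) ⊓ (e - q) := by
    rw [sub_eq_add_neg, neg_sup, add_inf, ← sub_eq_add_neg, ← sub_eq_add_neg]
  show (p + q) ⊓ (e - (p + q)) = 0
  rw [add_eq_sup_of_inf_eq_zero hpq, hcompl, inf_sup_right_of_addGroup]
  refine le_antisymm (sup_le ?_ ?_) (le_sup_left.trans' ?_)
  · exact (inf_le_inf_left _ inf_le_left).trans (Eq.le hp)
  · exact (inf_le_inf_left _ inf_le_right).trans (Eq.le hq)
  · exact le_inf (nonneg hp) (le_inf (hp ▸ inf_le_right) (hq ▸ inf_le_right))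

lemma sub_inf_eq_zero (hp : p ∈ Comp e) (hq : q ∈ Comp e) (hqp : q ≤ p) :
    (p - q) ⊓ q = 0 := by
  rw [inf_comm]
  exact inf_eq_zero_of_le (nonneg hq) (sub_nonneg.mpr hqp) (sub_le_sub_right (le hp) q) hq

lemma sub (hp : p ∈ Comp e) (hq : q ∈ Comp e) (hqp : q ≤ p) : p - q ∈ Comp e := by
  have hdisj : (e - p) ⊓ q = 0 :=
    inf_eq_zero_of_le (nonneg (compl hp)) (nonneg hq) hqp (by rw [inf_comm]; exact hp)
  have h := compl (add (compl hp) hq hdisj)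
  rwa [sub_add_eq_sub_sub, sub_sub_cancel] at h

lemma le_sub_of_inf_eq_zero {x : α} (hp : p ∈ Comp e) (hx : 0 ≤ x) (hxe : x ≤ e)
    (hxp : x ⊓ p = 0) : x ≤ e - p :=
  calc x = x ⊓ (p + (e - p)) := by rw [add_sub_cancel, inf_eq_left.mpr hxe]
    _ ≤ x ⊓ p + x ⊓ (e - p) := inf_add_le_inf_add_inf hx (nonneg hp) (nonneg (compl hp))
    _ ≤ e - p := by rw [hxp, zero_add]; exact inf_le_right

end

end Comp

section Components

variable {α : Type*} [Lattice α] [AddCommGroup α] [AddLeftMono α] {e : α}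

lemma Comp.sum {ι : Type*} (he : 0 ≤ e) {s : Finset ι} {p : ι → α}
    (hp : ∀ i ∈ s, p i ∈ Comp e) (hd : (s : Set ι).Pairwise fun i k => p i ⊓ p k = 0) :
    ∑ i ∈ s, p i ∈ Comp e := by
  induction s using Finset.cons_induction with
  | empty => simpa using Comp.zero he
  | cons i s hi ih =>
    rw [Finset.forall_mem_cons] at hp
    rw [Finset.coe_cons, Set.pairwise_insert] at hd
    rw [Finset.sum_cons]
    exact Comp.add hp.1 (ih hp.2 hd.1) <| inf_sum_eq_zero (Comp.nonneg hp.1)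
      (fun k hk => Comp.nonneg (hp.2 k hk)) fun k hk => (hd.2 k hk fun h => hi (h ▸ hk)).1

lemma IsChargeOn.map_sum {F : Type*} [Lattice F] [AddCommGroup F] {μ : α → F}
    (hμ : IsChargeOn e μ) (he : 0 ≤ e) {ι : Type*} {s : Finset ι} {p : ι → α}
    (hp : ∀ i ∈ s, p i ∈ Comp e) (hd : (s : Set ι).Pairwise fun i k => p i ⊓ p k = 0) :
    μ (∑ i ∈ s, p i) = ∑ i ∈ s, μ (p i) := by
  induction s using Finset.cons_induction with
  | empty => simpa using hμ.1
  | cons i s hi ih =>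
    rw [Finset.forall_mem_cons] at hp
    rw [Finset.coe_cons, Set.pairwise_insert] at hd
    rw [Finset.sum_cons, Finset.sum_cons, ← ih hp.2 hd.1]
    exact hμ.2 _ _ hp.1 (Comp.sum he hp.2 hd.1) <| inf_sum_eq_zero (Comp.nonneg hp.1)
      (fun k hk => Comp.nonneg (hp.2 k hk)) fun k hk => (hd.2 k hk fun h => hi (h ▸ hk)).1

lemma Comp.eq_sum_inf {ι : Type*} [Fintype ι] {p : α} {q : ι → α} (hp : p ∈ Comp e)
    (hq : ∀ k, q k ∈ Comp e) (hd : ∀ k l, k ≠ l → q k ⊓ q l = 0) (hsum : ∑ k, q k = e) :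
    p = ∑ k, p ⊓ q k := by
  conv_lhs => rw [← inf_eq_left.mpr (Comp.le hp), ← hsum]
  exact inf_sum_eq_sum_inf (Comp.nonneg hp) _ _ (fun k _ => Comp.nonneg (hq k))
    fun k _ l _ h => hd k l h

lemma IsChargeOn.map_eq_sum_inf {F : Type*} [Lattice F] [AddCommGroup F] {μ : α → F}
    (hμ : IsChargeOn e μ) (he : 0 ≤ e) {ι : Type*} [Fintype ι] {p : α} {q : ι → α}
    (hp : p ∈ Comp e) (hq : ∀ k, q k ∈ Comp e) (hd : ∀ k l, k ≠ l → q k ⊓ q l = 0)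
    (hsum : ∑ k, q k = e) : μ p = ∑ k, μ (p ⊓ q k) := by
  conv_lhs => rw [Comp.eq_sum_inf hp hq hd hsum]
  refine hμ.map_sum he (fun k _ => Comp.inf hp (hq k)) fun k _ l _ hkl => ?_
  refine le_antisymm ?_
    (le_inf (Comp.nonneg (Comp.inf hp (hq k))) (Comp.nonneg (Comp.inf hp (hq l))))
  exact (inf_le_inf inf_le_right inf_le_right).trans (hd k l hkl).le

end Components

section BandProjection

variable {α : Type*} [ConditionallyCompleteLattice α] [AddCommGroup α] {e f x : α}

lemma projChain_nonempty (f x : α) : (projChain f x).Nonempty := ⟨_, 0, rfl⟩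

lemma isLUB_projP (f x : α) : IsLUB (projChain f x) (projP f x) := by
  have hex : ∃ s, IsLUB (projChain f x) s :=
    ⟨_, isLUB_csSup (projChain_nonempty f x) ⟨x, by rintro _ ⟨n, rfl⟩; exact inf_le_left⟩⟩
  rw [projP, dif_pos hex]
  exact hex.choose_spec

lemma projP_nonneg (f : α) (hx : 0 ≤ x) : 0 ≤ projP f x :=
  (isLUB_projP f x).1 ⟨0, by rw [zero_nsmul, inf_eq_right.mpr hx]⟩

lemma projP_le (f x : α) : projP f x ≤ x :=
  (isLUB_projP f x).2 (by rintro _ ⟨n, rfl⟩; exact inf_le_left)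

variable [AddLeftMono α]

lemma projP_mono {g : α} (h : |f| ≤ |g|) : projP f x ≤ projP g x :=
  (isLUB_projP f x).2 <| by
    rintro _ ⟨n, rfl⟩
    exact (inf_le_inf_left x (nsmul_le_nsmul_right h n)).trans ((isLUB_projP g x).1 ⟨n, rfl⟩)

lemma projP_zero (hx : 0 ≤ x) : projP (0 : α) x = 0 :=
  le_antisymm ((isLUB_projP 0 x).2 (by rintro _ ⟨n, rfl⟩; simp [inf_eq_right.mpr hx]))
    (projP_nonneg 0 hx)

lemma inf_projP_eq_zero (he : 0 ≤ e) (hx : 0 ≤ x) (hxf : x ⊓ |f| = 0) :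
    x ⊓ projP f e = 0 := by
  refine inf_eq_zero_of_isLUB (isLUB_projP f e) (projChain_nonempty f e) ?_
  rintro _ ⟨n, rfl⟩
  refine le_antisymm ?_ (le_inf hx (le_inf he (nsmul_nonneg (abs_nonneg f) n)))
  calc x ⊓ (e ⊓ n • |f|) ≤ x ⊓ n • |f| := inf_le_inf_left x inf_le_right
    _ ≤ n • (x ⊓ |f|) := inf_nsmul_le_nsmul_inf hx (abs_nonneg f) n
    _ = 0 := by rw [hxf, smul_zero]

lemma inf_sub_projP_eq_zero (he : 0 ≤ e) (hf : 0 ≤ f) : f ⊓ (e - projP f e) = 0 := by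
  set p := projP f e
  set w := f ⊓ (e - p)
  have hw0 : 0 ≤ w := le_inf hf (sub_nonneg.mpr (projP_le f e))
  have hchain : ∀ n : ℕ, e ⊓ n • |f| ≤ p := fun n => (isLUB_projP f e).1 ⟨n, rfl⟩
  -- `e ⊓ n|f| ≤ p ≤ e - w`, so adding `w ≤ |f|` stays below `e ⊓ (n + 1)|f|`
  have key : ∀ n : ℕ, n • w ≤ e ⊓ n • |f| := by
    intro n
    induction n with
    | zero => simp [inf_eq_right.mpr he]
    | succ n ih =>
      have hpw : p ≤ e - w := le_sub_comm.mp inf_le_right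
      calc (n + 1) • w = n • w + w := succ_nsmul w n
        _ ≤ (e - w) ⊓ n • |f| + w ⊓ |f| :=
          add_le_add (ih.trans (le_inf ((hchain n).trans hpw) inf_le_right))
            (le_inf le_rfl (inf_le_left.trans (le_abs_self f)))
        _ ≤ (e - w + w) ⊓ (n • |f| + |f|) :=
          le_inf (add_le_add inf_le_left inf_le_left) (add_le_add inf_le_right inf_le_right)
        _ = e ⊓ (n + 1) • |f| := by rw [sub_add_cancel, succ_nsmul]
  exact le_antisymm (nonpos_of_forall_nsmul_le fun n => (key n).trans (hchain n)) hw0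

lemma projP_mem_Comp (he : 0 ≤ e) (hf : 0 ≤ f) : projP f e ∈ Comp e := by
  show projP f e ⊓ (e - projP f e) = 0
  rw [inf_comm]
  refine inf_projP_eq_zero he (sub_nonneg.mpr (projP_le f e)) ?_
  rw [abs_of_nonneg hf, inf_comm]
  exact inf_sub_projP_eq_zero he hf

end BandProjection

lemma Finset.sum_range_two_mul {M : Type*} [AddCommMonoid M] (g : ℕ → M) (N : ℕ) :
    ∑ i ∈ Finset.range (2 * N), g i = ∑ i ∈ Finset.range N, (g (2 * i) + g (2 * i + 1)) := by
  induction N with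
  | zero => simp
  | succ N ih =>
    rw [Nat.mul_succ, Finset.sum_range_succ, Finset.sum_range_succ, ih, Finset.sum_range_succ,
      add_assoc]

lemma Finset.sum_range_smul_sub_succ {M : Type*} [AddCommGroup M] [Module ℝ M] (t : ℕ → M)
    (N : ℕ) : ∑ k ∈ Finset.range N, (k : ℝ) • (t k - t (k + 1)) =
      ∑ k ∈ Finset.range N, t (k + 1) - (N : ℝ) • t N := by
  induction N with
  | zero => simp
  | succ N ih =>
    rw [Finset.sum_range_succ, Finset.sum_range_succ, ih, Nat.cast_succ, add_smul, one_smul,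
      smul_sub]
    abel

section Dyadic

variable {α : Type*} [ConditionallyCompleteLattice α] [AddCommGroup α] [Module ℝ α] {e f h : α}

-- Level `0` is `e` itself rather than the band projection of `e` onto `f`: the layers then
-- partition `e`, and the surplus `e - P_f e` lies in layer `0`, whose coefficient is `0`.
def dyadicProj (e f h : α) (n k : ℕ) : α :=
  if k = 0 then e else projP (f - ((k : ℝ) / 2 ^ n) • h)⁺ e

def dyadicLayer (e f h : α) (n k : ℕ) : α := dyadicProj e f h n k - dyadicProj e f h n (k + 1)

lemma dyadicProj_of_ne_zero {n k : ℕ} (hk : k ≠ 0) :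
    dyadicProj e f h n k = projP (f - ((k : ℝ) / 2 ^ n) • h)⁺ e := if_neg hk

lemma dyadicProj_two_mul (n k : ℕ) :
    dyadicProj e f h (n + 1) (2 * k) = dyadicProj e f h n k := by
  rcases eq_or_ne k 0 with rfl | hk
  · simp [dyadicProj]
  rw [dyadicProj_of_ne_zero (mul_ne_zero two_ne_zero hk), dyadicProj_of_ne_zero hk]
  congr 4
  push_cast
  rw [pow_succ]
  field_simp

variable [AddLeftMono α]

lemma dyadicProj_mem_Comp (he : 0 ≤ e) (n k : ℕ) : dyadicProj e f h n k ∈ Comp e := by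
  unfold dyadicProj
  split_ifs
  exacts [Comp.self he, projP_mem_Comp he (posPart_nonneg _)]

lemma dyadicProj_two_pow (he : 0 ≤ e) (hfh : f ≤ h) (n : ℕ) :
    dyadicProj e f h n (2 ^ n) = 0 := by
  rw [dyadicProj_of_ne_zero (pow_ne_zero n two_ne_zero), Nat.cast_pow, Nat.cast_ofNat,
    div_self (pow_ne_zero n two_ne_zero), one_smul, posPart_eq_zero.mpr (sub_nonpos.mpr hfh)]
  exact projP_zero he

lemma dyadicLayer_le (he : 0 ≤ e) (n k : ℕ) : dyadicLayer e f h n k ≤ dyadicProj e f h n k :=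
  sub_le_self _ (Comp.nonneg (dyadicProj_mem_Comp he n (k + 1)))

lemma dyadicLayer_le_sub (he : 0 ≤ e) (n k : ℕ) :
    dyadicLayer e f h n k ≤ e - dyadicProj e f h n (k + 1) :=
  sub_le_sub_right (Comp.le (dyadicProj_mem_Comp he n k)) _

lemma sum_dyadicLayer (he : 0 ≤ e) (hfh : f ≤ h) (n : ℕ) :
    ∑ k ∈ Finset.range (2 ^ n), dyadicLayer e f h n k = e := by
  unfold dyadicLayer
  rw [Finset.sum_range_sub' (dyadicProj e f h n), dyadicProj_two_pow he hfh, sub_zero]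
  rfl

def dyadicStaircase (e f h : α) (n : ℕ) : α :=
  ∑ k ∈ Finset.range (2 ^ n), ((k : ℝ) / 2 ^ n) • dyadicLayer e f h n k

lemma dyadicStaircase_eq (he : 0 ≤ e) (hfh : f ≤ h) (n : ℕ) :
    dyadicStaircase e f h n =
      ((2 : ℝ) ^ n)⁻¹ • ∑ k ∈ Finset.range (2 ^ n), dyadicProj e f h n (k + 1) := by
  simp_rw [dyadicStaircase, div_eq_inv_mul, mul_smul, ← Finset.smul_sum, dyadicLayer,
    Finset.sum_range_smul_sub_succ, dyadicProj_two_pow he hfh, smul_zero, sub_zero]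

variable [PosSMulMono ℝ α]

lemma dyadicProj_antitone (he : 0 ≤ e) (hh : 0 ≤ h) (n : ℕ) :
    Antitone (dyadicProj e f h n) := by
  refine antitone_nat_of_succ_le fun k => ?_
  rcases eq_or_ne k 0 with rfl | hk
  · exact Comp.le (dyadicProj_mem_Comp he n 1)
  rw [dyadicProj_of_ne_zero hk, dyadicProj_of_ne_zero k.succ_ne_zero]
  refine projP_mono ?_
  rw [abs_of_nonneg (posPart_nonneg _), abs_of_nonneg (posPart_nonneg _)]
  refine posPart_mono (sub_le_sub_left (smul_le_smul_of_nonneg_right ?_ hh) f)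
  gcongr
  exact k.le_succ

lemma dyadicLayer_mem_Comp (he : 0 ≤ e) (hh : 0 ≤ h) (n k : ℕ) :
    dyadicLayer e f h n k ∈ Comp e :=
  Comp.sub (dyadicProj_mem_Comp he n k) (dyadicProj_mem_Comp he n (k + 1))
    (dyadicProj_antitone he hh n k.le_succ)

lemma dyadicLayer_inf_eq_zero (he : 0 ≤ e) (hh : 0 ≤ h) (n : ℕ) {k l : ℕ} (hkl : k ≠ l) :
    dyadicLayer e f h n k ⊓ dyadicLayer e f h n l = 0 := by
  wlog hlt : k < l generalizing k l
  · rw [inf_comm]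
    exact this hkl.symm (hkl.lt_or_gt.resolve_left hlt)
  have hQ := dyadicLayer_mem_Comp (f := f) he hh n
  exact inf_eq_zero_of_le (Comp.nonneg (hQ k)) (Comp.nonneg (hQ l))
    ((dyadicLayer_le he n l).trans (dyadicProj_antitone he hh n hlt))
    (Comp.sub_inf_eq_zero (dyadicProj_mem_Comp he n k) (dyadicProj_mem_Comp he n (k + 1))
      (dyadicProj_antitone he hh n k.le_succ))

lemma negPart_inf_dyadicLayer (he : 0 ≤ e) (hf : 0 ≤ f) (hh : 0 ≤ h) (n k : ℕ) :
    (f - ((k : ℝ) / 2 ^ n) • h)⁻ ⊓ dyadicLayer e f h n k = 0 := by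
  rcases eq_or_ne k 0 with rfl | hk
  · rw [Nat.cast_zero, zero_div, zero_smul, sub_zero, negPart_eq_zero.mpr hf]
    exact inf_eq_left.mpr (Comp.nonneg (dyadicLayer_mem_Comp he hh n 0))
  refine inf_eq_zero_of_le (negPart_nonneg _) (Comp.nonneg (dyadicLayer_mem_Comp he hh n k))
    (dyadicLayer_le he n k) ?_
  rw [dyadicProj_of_ne_zero hk]
  refine inf_projP_eq_zero he (negPart_nonneg _) ?_
  rw [abs_of_nonneg (posPart_nonneg _), inf_comm]
  exact posPart_inf_negPart_eq_zero _

lemma posPart_inf_dyadicLayer (he : 0 ≤ e) (hh : 0 ≤ h) (n k : ℕ) :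
    (f - (((k + 1 : ℕ) : ℝ) / 2 ^ n) • h)⁺ ⊓ dyadicLayer e f h n k = 0 := by
  refine inf_eq_zero_of_le (posPart_nonneg _) (Comp.nonneg (dyadicLayer_mem_Comp he hh n k))
    (dyadicLayer_le_sub he n k) ?_
  rw [dyadicProj_of_ne_zero k.succ_ne_zero]
  exact inf_sub_projP_eq_zero he (posPart_nonneg _)

lemma dyadicStaircase_le_succ (he : 0 ≤ e) (hh : 0 ≤ h) (hfh : f ≤ h) (n : ℕ) :
    dyadicStaircase e f h n ≤ dyadicStaircase e f h (n + 1) := by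
  have hP : ∀ k, dyadicProj e f h (n + 1) (2 * k + 1 + 1) = dyadicProj e f h n (k + 1) :=
    fun k => by rw [← dyadicProj_two_mul n (k + 1), Nat.mul_succ]
  rw [dyadicStaircase_eq he hfh, dyadicStaircase_eq he hfh]
  calc ((2 : ℝ) ^ n)⁻¹ • ∑ k ∈ Finset.range (2 ^ n), dyadicProj e f h n (k + 1)
      = ((2 : ℝ) ^ (n + 1))⁻¹ • ∑ k ∈ Finset.range (2 ^ n),
          (dyadicProj e f h n (k + 1) + dyadicProj e f h n (k + 1)) := by
        rw [Finset.sum_add_distrib, ← two_smul ℝ, smul_smul, pow_succ, mul_inv,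
          inv_mul_cancel_right₀ two_ne_zero]
    _ ≤ ((2 : ℝ) ^ (n + 1))⁻¹ • ∑ k ∈ Finset.range (2 ^ n),
          (dyadicProj e f h (n + 1) (2 * k + 1) + dyadicProj e f h (n + 1) (2 * k + 1 + 1)) := by
        refine smul_le_smul_of_nonneg_left (Finset.sum_le_sum fun k _ => ?_) (by positivity)
        rw [hP]
        exact add_le_add_left (hP k ▸ dyadicProj_antitone he hh (n + 1) (2 * k + 1).le_succ) _
    _ = ((2 : ℝ) ^ (n + 1))⁻¹ • ∑ k ∈ Finset.range (2 ^ (n + 1)),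
          dyadicProj e f h (n + 1) (k + 1) := by
        rw [show 2 ^ (n + 1) = 2 * 2 ^ n from pow_succ' 2 n, Finset.sum_range_two_mul]

end Dyadic

lemma abs_smul_le {M : Type*} [Lattice M] [AddCommGroup M] [AddLeftMono M] [Module ℝ M]
    [PosSMulMono ℝ M] (r : ℝ) (a : M) : |r • a| ≤ |r| • |a| := by
  wlog hr : 0 ≤ r generalizing r
  · simpa [neg_smul, abs_neg] using this (-r) (by linarith)
  rw [abs_of_nonneg hr]
  refine sup_le (smul_le_smul_of_nonneg_left (le_abs_self a) hr) ?_
  rw [← smul_neg]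
  exact smul_le_smul_of_nonneg_left (neg_le_abs a) hr

namespace CRT

variable {E : Type u} {G : Type v}
  [ConditionallyCompleteLattice E] [AddCommGroup E] [Module ℝ E]
  [CovariantClass E E (· + ·) (· ≤ ·)] [PosSMulMono ℝ E]
  [ConditionallyCompleteLattice G] [AddCommGroup G] [Module ℝ G]
  [CovariantClass G G (· + ·) (· ≤ ·)] [PosSMulMono ℝ G]
  (C : CRT E G)

lemma j_nonneg_iff {x : E} : 0 ≤ C.j x ↔ 0 ≤ x := C.compl.bipos x

lemma j_le_j_iff {x y : E} : C.j x ≤ C.j y ↔ x ≤ y := by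
  rw [← sub_nonneg, ← map_sub, C.j_nonneg_iff, sub_nonneg]

lemma j_injective : Function.Injective C.j := fun _ _ h =>
  le_antisymm (C.j_le_j_iff.mp h.le) (C.j_le_j_iff.mp h.ge)

lemma j_sup (x y : E) : C.j (x ⊔ y) = C.j x ⊔ C.j y := C.compl.latHom x y

lemma j_inf (x y : E) : C.j (x ⊓ y) = C.j x ⊓ C.j y := by
  rw [← neg_neg (x ⊓ y), neg_inf, map_neg, C.j_sup, map_neg, map_neg, neg_sup, neg_neg, neg_neg]

lemma j_posPart (x : E) : C.j x⁺ = (C.j x)⁺ := by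
  rw [posPart_def, posPart_def, C.j_sup, map_zero]

lemma j_mem_Comp {p : E} (hp : p ∈ Comp C.e) : C.j p ∈ Comp (C.j C.e) := by
  show C.j p ⊓ (C.j C.e - C.j p) = 0
  rw [← map_sub, ← C.j_inf, hp, map_zero]

lemma e_nonneg : 0 ≤ C.e := C.triple.weakUnit.1.le

lemma T_nonneg {x : E} (hx : 0 ≤ x) : 0 ≤ C.T x := C.triple.pos x hx

lemma T_mono {x y : E} (h : x ≤ y) : C.T x ≤ C.T y :=
  sub_nonneg.mp (map_sub C.T y x ▸ C.T_nonneg (sub_nonneg.mpr h))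

lemma T_eq_self {a : E} (ha : a ∈ C.R) : C.T a = a := by
  obtain ⟨x, rfl⟩ := ha
  exact C.triple.idem x

-- `C.R` is definitionally the carrier of the submodule `LinearMap.range C.T`
lemma zero_mem_R : (0 : E) ∈ C.R := (LinearMap.range C.T).zero_mem

lemma e_mem_R : C.e ∈ C.R := ⟨C.e, C.triple.unitFix⟩

lemma add_mem_R {a b : E} (ha : a ∈ C.R) (hb : b ∈ C.R) : a + b ∈ C.R :=
  (LinearMap.range C.T).add_mem ha hb

lemma neg_mem_R {a : E} (ha : a ∈ C.R) : -a ∈ C.R := (LinearMap.range C.T).neg_mem ha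

lemma sub_mem_R {a b : E} (ha : a ∈ C.R) (hb : b ∈ C.R) : a - b ∈ C.R :=
  (LinearMap.range C.T).sub_mem ha hb

lemma smul_mem_R {a : E} (r : ℝ) (ha : a ∈ C.R) : r • a ∈ C.R :=
  (LinearMap.range C.T).smul_mem r ha

lemma nsmul_mem_R {a : E} (n : ℕ) (ha : a ∈ C.R) : n • a ∈ C.R :=
  (LinearMap.range C.T).nsmul_mem ha n

lemma sup_mem_R {a b : E} (ha : a ∈ C.R) (hb : b ∈ C.R) : a ⊔ b ∈ C.R :=
  C.triple.rangeSupClosed a b ha hb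

lemma inf_mem_R {a b : E} (ha : a ∈ C.R) (hb : b ∈ C.R) : a ⊓ b ∈ C.R := by
  rw [← neg_neg (a ⊓ b), neg_inf]
  exact C.neg_mem_R (C.sup_mem_R (C.neg_mem_R ha) (C.neg_mem_R hb))

lemma posPart_mem_R {a : E} (ha : a ∈ C.R) : a⁺ ∈ C.R := C.sup_mem_R ha C.zero_mem_R

lemma negPart_mem_R {a : E} (ha : a ∈ C.R) : a⁻ ∈ C.R := C.posPart_mem_R (C.neg_mem_R ha)

lemma abs_mem_R {a : E} (ha : a ∈ C.R) : |a| ∈ C.R := C.sup_mem_R ha (C.neg_mem_R ha)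

lemma mem_Linf_of_mem_R {a : E} (ha : a ∈ C.R) : a ∈ C.Linf :=
  ⟨|a|, C.abs_mem_R ha, abs_nonneg a, le_rfl⟩

lemma add_mem_Linf {a b : E} (ha : a ∈ C.Linf) (hb : b ∈ C.Linf) : a + b ∈ C.Linf := by
  obtain ⟨g, hgR, hg0, hag⟩ := ha
  obtain ⟨g', hgR', hg0', hbg'⟩ := hb
  exact ⟨g + g', C.add_mem_R hgR hgR', add_nonneg hg0 hg0',
    (abs_add_le a b).trans (add_le_add hag hbg')⟩

lemma smul_mem_Linf {a : E} (r : ℝ) (ha : a ∈ C.Linf) : r • a ∈ C.Linf := by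
  obtain ⟨g, hgR, hg0, hag⟩ := ha
  exact ⟨|r| • g, C.smul_mem_R |r| hgR, smul_nonneg (abs_nonneg r) hg0,
    (abs_smul_le r a).trans (smul_le_smul_of_nonneg_left hag (abs_nonneg r))⟩

lemma neg_mem_Linf {a : E} (ha : a ∈ C.Linf) : -a ∈ C.Linf := by
  simpa using C.smul_mem_Linf (-1) ha

lemma sub_mem_Linf {a b : E} (ha : a ∈ C.Linf) (hb : b ∈ C.Linf) : a - b ∈ C.Linf :=
  sub_eq_add_neg a b ▸ C.add_mem_Linf ha (C.neg_mem_Linf hb)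

def mulₗ : G →ₗ[ℝ] G →ₗ[ℝ] G :=
  LinearMap.mk₂ ℝ C.mul C.falg.add_left C.falg.smul_left
    (fun x y z => by rw [C.falg.comm, C.falg.add_left, C.falg.comm y, C.falg.comm z])
    (fun r x y => by rw [C.falg.comm, C.falg.smul_left, C.falg.comm])

lemma mul_comm (x y : G) : C.mul x y = C.mul y x := C.falg.comm x y

lemma add_mul (x y z : G) : C.mul (x + y) z = C.mul x z + C.mul y z := C.falg.add_left x y z

lemma mul_add (x y z : G) : C.mul x (y + z) = C.mul x y + C.mul x z := (C.mulₗ x).map_add y z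

lemma sub_mul (x y z : G) : C.mul (x - y) z = C.mul x z - C.mul y z := C.mulₗ.map_sub₂ x y z

lemma mul_sub (x y z : G) : C.mul x (y - z) = C.mul x y - C.mul x z := (C.mulₗ x).map_sub y z

lemma mul_zero (x : G) : C.mul x 0 = 0 := (C.mulₗ x).map_zero

lemma smul_mul (r : ℝ) (x y : G) : C.mul (r • x) y = r • C.mul x y := C.falg.smul_left r x y

lemma sum_mul {ι : Type*} (s : Finset ι) (f : ι → G) (z : G) :
    C.mul (∑ i ∈ s, f i) z = ∑ i ∈ s, C.mul (f i) z := C.mulₗ.map_sum₂ s f z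

lemma mul_sum {ι : Type*} (s : Finset ι) (f : ι → G) (z : G) :
    C.mul z (∑ i ∈ s, f i) = ∑ i ∈ s, C.mul z (f i) := map_sum (C.mulₗ z) f s

lemma one_mul (x : G) : C.mul (C.j C.e) x = x := C.falg.one_mul x

lemma mul_one (x : G) : C.mul x (C.j C.e) = x := by rw [C.mul_comm, C.one_mul]

lemma mul_nonneg {x y : G} (hx : 0 ≤ x) (hy : 0 ≤ y) : 0 ≤ C.mul x y :=
  C.falg.mul_nonneg x y hx hy

lemma mul_le_mul_of_nonneg_right {x y z : G} (h : x ≤ y) (hz : 0 ≤ z) :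
    C.mul x z ≤ C.mul y z :=
  sub_nonneg.mp (C.sub_mul y x z ▸ C.mul_nonneg (sub_nonneg.mpr h) hz)

lemma mul_le_mul_of_nonneg_left {x y z : G} (h : x ≤ y) (hz : 0 ≤ z) :
    C.mul z x ≤ C.mul z y := by
  rw [C.mul_comm z x, C.mul_comm z y]
  exact C.mul_le_mul_of_nonneg_right h hz

lemma mul_eq_zero_of_inf_eq_zero {x y : G} (hx : 0 ≤ x) (hy : 0 ≤ y) (h : x ⊓ y = 0) :
    C.mul x y = 0 := by
  -- `x ⊥ y` gives `x y ⊥ x`, hence `x y ⊥ x y`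
  have hyx : C.mul y x ⊓ x = 0 := C.falg.disj y x x (by rwa [inf_comm]) hx
  have h2 := C.falg.disj x (C.mul y x) y (by rwa [inf_comm] at hyx) hy
  rwa [C.mul_comm y x, inf_idem] at h2

lemma mul_eq_self_of_le_comp {y r : G} (hr : r ∈ Comp (C.j C.e)) (hy : 0 ≤ y) (hyr : y ≤ r) :
    C.mul y r = y := by
  have hcompl : C.mul y (C.j C.e - r) = 0 := by
    refine le_antisymm ?_ (C.mul_nonneg hy (Comp.nonneg (Comp.compl hr)))
    calc C.mul y (C.j C.e - r) ≤ C.mul r (C.j C.e - r) :=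
          C.mul_le_mul_of_nonneg_right hyr (Comp.nonneg (Comp.compl hr))
      _ = 0 := C.mul_eq_zero_of_inf_eq_zero (Comp.nonneg hr) (Comp.nonneg (Comp.compl hr)) hr
  rw [C.mul_sub, C.mul_one, sub_eq_zero] at hcompl
  exact hcompl.symm

lemma mul_comp_eq_inf {a b : G} (ha : a ∈ Comp (C.j C.e)) (hb : b ∈ Comp (C.j C.e)) :
    C.mul a b = a ⊓ b := by
  refine le_antisymm (le_inf ?_ ?_) ?_
  · exact (C.mul_le_mul_of_nonneg_left (Comp.le hb) (Comp.nonneg ha)).trans_eq (C.mul_one a)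
  · exact (C.mul_le_mul_of_nonneg_right (Comp.le ha) (Comp.nonneg hb)).trans_eq (C.one_mul b)
  · calc a ⊓ b = C.mul (a ⊓ b) b :=
          (C.mul_eq_self_of_le_comp hb (le_inf (Comp.nonneg ha) (Comp.nonneg hb)) inf_le_right).symm
      _ ≤ C.mul a b := C.mul_le_mul_of_nonneg_right inf_le_left (Comp.nonneg hb)

lemma inf_eq_zero_of_mul_eq_zero {c r : G} (hc : 0 ≤ c) (hr : r ∈ Comp (C.j C.e))
    (hcr : C.mul c r = 0) : c ⊓ r = 0 := by
  refine le_antisymm ?_ (le_inf hc (Comp.nonneg hr))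
  calc c ⊓ r = C.mul (c ⊓ r) r :=
        (C.mul_eq_self_of_le_comp hr (le_inf hc (Comp.nonneg hr)) inf_le_right).symm
    _ ≤ C.mul c r := C.mul_le_mul_of_nonneg_right inf_le_left (Comp.nonneg hr)
    _ = 0 := hcr

lemma posPart_mul (x : G) {q : G} (hq : 0 ≤ q) : (C.mul x q)⁺ = C.mul x⁺ q := by
  have hd : C.mul x⁺ q ⊓ C.mul x⁻ q = 0 := by
    have h1 := C.falg.disj x⁺ x⁻ q (posPart_inf_negPart_eq_zero x) hq
    rw [inf_comm]
    exact C.falg.disj x⁻ (C.mul x⁺ q) q (by rwa [inf_comm] at h1) hq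
  rw [← posPart_sub_negPart x, C.sub_mul, posPart_sub_of_inf_eq_zero hd, posPart_sub_negPart]

lemma j_sm {g : E} (hg : g ∈ C.Linf) (f : E) : C.j (C.sm g f) = C.mul (C.j g) (C.j f) :=
  Function.invFun_eq (C.mulClosed g f hg)

lemma sm_nonneg {g x : E} (hg : g ∈ C.Linf) (hg0 : 0 ≤ g) (hx : 0 ≤ x) : 0 ≤ C.sm g x := by
  rw [← C.j_nonneg_iff, C.j_sm hg]
  exact C.mul_nonneg (C.j_nonneg_iff.mpr hg0) (C.j_nonneg_iff.mpr hx)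

lemma sm_le_sm_right {g x y : E} (hg : g ∈ C.Linf) (hg0 : 0 ≤ g) (hxy : x ≤ y) :
    C.sm g x ≤ C.sm g y := by
  rw [← C.j_le_j_iff, C.j_sm hg, C.j_sm hg]
  exact C.mul_le_mul_of_nonneg_left (C.j_le_j_iff.mpr hxy) (C.j_nonneg_iff.mpr hg0)

lemma sm_add_right {g : E} (hg : g ∈ C.Linf) (x y : E) :
    C.sm g (x + y) = C.sm g x + C.sm g y :=
  C.j_injective (by rw [map_add, C.j_sm hg, C.j_sm hg, C.j_sm hg, map_add, C.mul_add])

lemma sm_smul_right {g : E} (hg : g ∈ C.Linf) (r : ℝ) (x : E) :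
    C.sm g (r • x) = r • C.sm g x :=
  C.j_injective (by
    rw [map_smul, C.j_sm hg, C.j_sm hg, map_smul]
    exact (C.mulₗ (C.j g)).map_smul r (C.j x))

lemma sm_sum_right {g : E} (hg : g ∈ C.Linf) {ι : Type*} (s : Finset ι) (f : ι → E) :
    C.sm g (∑ i ∈ s, f i) = ∑ i ∈ s, C.sm g (f i) :=
  map_sum (AddMonoidHom.mk' (C.sm g) (C.sm_add_right hg)) f s

lemma sm_add_left {a b : E} (ha : a ∈ C.Linf) (hb : b ∈ C.Linf) (x : E) :
    C.sm (a + b) x = C.sm a x + C.sm b x :=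
  C.j_injective (by
    rw [map_add, C.j_sm (C.add_mem_Linf ha hb), C.j_sm ha, C.j_sm hb, map_add, C.add_mul])

lemma sm_smul_left {a : E} (ha : a ∈ C.Linf) (r : ℝ) (x : E) :
    C.sm (r • a) x = r • C.sm a x :=
  C.j_injective (by
    rw [map_smul, C.j_sm (C.smul_mem_Linf r ha), C.j_sm ha, map_smul, C.smul_mul])

lemma sm_sub_left {a b : E} (ha : a ∈ C.Linf) (hb : b ∈ C.Linf) (x : E) :
    C.sm (a - b) x = C.sm a x - C.sm b x :=
  C.j_injective (by
    rw [map_sub, C.j_sm (C.sub_mem_Linf ha hb), C.j_sm ha, C.j_sm hb, map_sub, C.sub_mul])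

lemma sm_zero_left (x : E) : C.sm 0 x = 0 := by
  simpa using C.sm_smul_left (C.mem_Linf_of_mem_R C.e_mem_R) 0 x

lemma sm_e {a : E} (ha : a ∈ C.Linf) : C.sm a C.e = a :=
  C.j_injective (by rw [C.j_sm ha, C.mul_one])

lemma projP_mem_R {γ : E} (hγ : γ ∈ C.R) : projP γ C.e ∈ C.R := by
  have hchain : projChain γ C.e ⊆ C.R := by
    rintro _ ⟨n, rfl⟩
    exact C.inf_mem_R C.e_mem_R (C.nsmul_mem_R n (C.abs_mem_R hγ))
  rw [← (isLUB_projP γ C.e).csSup_eq (projChain_nonempty γ C.e)]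
  exact C.triple.rangeDedekind _ hchain (projChain_nonempty γ C.e)
    ⟨C.e, by rintro _ ⟨n, rfl⟩; exact inf_le_left⟩

lemma inf_T_eq_zero {γ r : E} (hγR : γ ∈ C.R) (hγ : 0 ≤ γ) (hr : r ∈ Comp C.e)
    (hγr : γ ⊓ r = 0) : γ ⊓ C.T r = 0 := by
  -- `r` lies below `e - P_γ e`, which belongs to `R(T)` and is therefore fixed by `T`
  set p := projP γ C.e
  have hp : p ∈ Comp C.e := projP_mem_Comp C.e_nonneg hγ
  have hrp : r ⊓ p = 0 :=
    inf_projP_eq_zero C.e_nonneg (Comp.nonneg hr) (by rw [abs_of_nonneg hγ, inf_comm]; exact hγr)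
  have hTr := C.T_mono (Comp.le_sub_of_inf_eq_zero hp (Comp.nonneg hr) (Comp.le hr) hrp)
  rw [C.T_eq_self (C.sub_mem_R C.e_mem_R (C.projP_mem_R hγR))] at hTr
  exact inf_eq_zero_of_le hγ (C.T_nonneg (Comp.nonneg hr)) hTr (inf_sub_projP_eq_zero C.e_nonneg hγ)

lemma sm_eq_zero_of_mul_eq_zero {μ : E → E} {r c : E} (hr : r ∈ Comp C.e)
    (hμr : μ r ∈ pBand (C.T r)) (hμr0 : 0 ≤ μ r) (hcR : c ∈ C.R) (hc : 0 ≤ c)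
    (hcr : C.mul (C.j c) (C.j r) = 0) : C.sm c (μ r) = 0 := by
  have hcr' : c ⊓ r = 0 := C.j_injective <| by
    rw [C.j_inf, map_zero]
    exact C.inf_eq_zero_of_mul_eq_zero (C.j_nonneg_iff.mpr hc) (C.j_mem_Comp hr) hcr
  have hcT : c ∈ disjC {C.T r} := by
    rintro _ rfl
    rw [abs_of_nonneg hc, abs_of_nonneg (C.T_nonneg (Comp.nonneg hr))]
    exact C.inf_T_eq_zero hcR hc hr hcr'
  have hcμ : C.j c ⊓ C.j (μ r) = 0 := by
    rw [← C.j_inf, inf_comm, ← abs_of_nonneg hμr0, ← abs_of_nonneg hc, hμr c hcT, map_zero]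
  exact C.j_injective <| by
    rw [C.j_sm (C.mem_Linf_of_mem_R hcR), map_zero]
    exact C.mul_eq_zero_of_inf_eq_zero (C.j_nonneg_iff.mpr hc) (C.j_nonneg_iff.mpr hμr0) hcμ

lemma sm_le_sm_of_mem_pBand {μ : E → E} {a b r : E} (hr : r ∈ Comp C.e)
    (hμr : μ r ∈ pBand (C.T r)) (hμr0 : 0 ≤ μ r) (haR : a ∈ C.R) (hbR : b ∈ C.R)
    (hab : C.sm a r ≤ C.sm b r) : C.sm a (μ r) ≤ C.sm b (μ r) := by
  have habR : a - b ∈ C.R := C.sub_mem_R haR hbR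
  have hL : ∀ {c : E}, c ∈ C.R → c ∈ C.Linf := C.mem_Linf_of_mem_R
  -- `(a - b)⁺ r = ((a - b) r)⁺ = 0`, so `(a - b)⁺ μ(r) = 0`
  have hpos : C.sm (a - b)⁺ (μ r) = 0 := by
    refine C.sm_eq_zero_of_mul_eq_zero hr hμr hμr0 (C.posPart_mem_R habR) (posPart_nonneg _) ?_
    rw [C.j_posPart, ← C.posPart_mul _ (C.j_nonneg_iff.mpr (Comp.nonneg hr)), posPart_eq_zero,
      map_sub, C.sub_mul, ← C.j_sm (hL haR), ← C.j_sm (hL hbR), sub_nonpos, C.j_le_j_iff]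
    exact hab
  have hneg : 0 ≤ C.sm (a - b)⁻ (μ r) :=
    C.sm_nonneg (hL (C.negPart_mem_R habR)) (negPart_nonneg _) hμr0
  rw [← sub_nonpos, ← C.sm_sub_left (hL haR) (hL hbR), ← posPart_sub_negPart (a - b),
    C.sm_sub_left (hL (C.posPart_mem_R habR)) (hL (C.negPart_mem_R habR)), hpos,
    zero_sub, neg_nonpos]
  exact hneg

lemma eq_sum_mul_of_sum_eq {ι : Type*} {s : Finset ι} {p : ι → E} (hsum : ∑ i ∈ s, p i = C.e)
    (y : G) : y = ∑ i ∈ s, C.mul y (C.j (p i)) := by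
  rw [← C.mul_sum, ← map_sum, hsum, C.mul_one]

namespace IsStdRep

variable {C} {x : E} {n : ℕ} {α p : Fin n → E}

lemma j_eq (hx : C.IsStdRep x n α p) : C.j x = ∑ i, C.mul (C.j (α i)) (C.j (p i)) := by
  rw [hx.2.2.2.2, map_sum]
  exact Finset.sum_congr rfl fun i _ => C.j_sm (C.mem_Linf_of_mem_R (hx.1 i)) (p i)

lemma mul_eq_of_le (hx : C.IsStdRep x n α p) {w : E} (hw : w ∈ Comp C.e) {i : Fin n}
    (hwi : w ≤ p i) : C.mul (C.j x) (C.j w) = C.mul (C.j (α i)) (C.j w) := by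
  have ⟨_, hp, hpd, _, _⟩ := hx
  have hpw : ∀ k, C.mul (C.j (p k)) (C.j w) = C.j (p k ⊓ w) := fun k => by
    rw [C.mul_comp_eq_inf (C.j_mem_Comp (hp k)) (C.j_mem_Comp hw), C.j_inf]
  rw [hx.j_eq, C.sum_mul, Finset.sum_eq_single i]
  · rw [C.falg.assoc, hpw, inf_eq_right.mpr hwi]
  · intro k _ hki
    have hkw : p k ⊓ w = 0 :=
      inf_eq_zero_of_le (Comp.nonneg (hp k)) (Comp.nonneg hw) hwi (hpd k i hki)
    rw [C.falg.assoc, hpw, hkw, map_zero, C.mul_zero]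
  · exact fun h => absurd (Finset.mem_univ i) h

lemma add_mem_R (hx : C.IsStdRep x n α p) {a : E} (ha : a ∈ C.R) :
    C.IsStdRep (x + a) n (fun i => α i + a) p := by
  obtain ⟨hα, hp, hpd, hpe, hxe⟩ := hx
  refine ⟨fun i => C.add_mem_R (hα i) ha, hp, hpd, hpe, ?_⟩
  have haL := C.mem_Linf_of_mem_R ha
  rw [hxe]
  conv_lhs => rw [← C.sm_e haL, ← hpe, C.sm_sum_right haL, ← Finset.sum_add_distrib]
  exact Finset.sum_congr rfl fun i _ => (C.sm_add_left (C.mem_Linf_of_mem_R (hα i)) haL _).symm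

lemma posPart (hx : C.IsStdRep x n α p) : C.IsStdRep x⁺ n (fun i => (α i)⁺) p := by
  have ⟨hα, hp, hpd, hpe, _⟩ := hx
  refine ⟨fun i => C.posPart_mem_R (hα i), hp, hpd, hpe, C.j_injective ?_⟩
  have hp0 : ∀ i, 0 ≤ C.j (p i) := fun i => C.j_nonneg_iff.mpr (Comp.nonneg (hp i))
  rw [C.j_posPart, C.eq_sum_mul_of_sum_eq hpe (C.j x)⁺, map_sum]
  refine Finset.sum_congr rfl fun i _ => ?_
  rw [← C.posPart_mul _ (hp0 i), hx.mul_eq_of_le (hp i) le_rfl, C.posPart_mul _ (hp0 i),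
    C.j_sm (C.mem_Linf_of_mem_R (C.posPart_mem_R (hα i))), C.j_posPart]

end IsStdRep

lemma sum_sm_charge_le {μ : E → E} (hμ : μ ∈ C.baT) (hμ0 : ∀ p ∈ Comp C.e, 0 ≤ μ p)
    {x y : E} {n m : ℕ} {α p : Fin n → E} {β q : Fin m → E}
    (hx : C.IsStdRep x n α p) (hy : C.IsStdRep y m β q) (hxy : x ≤ y) :
    ∑ i, C.sm (α i) (μ (p i)) ≤ ∑ k, C.sm (β k) (μ (q k)) := by
  have ⟨hα, hp, hpd, hpe, _⟩ := hx
  have ⟨hβ, hq, hqd, hqe, _⟩ := hy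
  have hr : ∀ i k, p i ⊓ q k ∈ Comp C.e := fun i k => Comp.inf (hp i) (hq k)
  have hcell : ∀ i k, C.sm (α i) (μ (p i ⊓ q k)) ≤ C.sm (β k) (μ (p i ⊓ q k)) := by
    intro i k
    refine C.sm_le_sm_of_mem_pBand (hr i k) (hμ.2 _ (hr i k)) (hμ0 _ (hr i k)) (hα i) (hβ k) ?_
    rw [← C.j_le_j_iff, C.j_sm (C.mem_Linf_of_mem_R (hα i)), C.j_sm (C.mem_Linf_of_mem_R (hβ k)),
      ← hx.mul_eq_of_le (hr i k) inf_le_left, ← hy.mul_eq_of_le (hr i k) inf_le_right]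
    exact C.mul_le_mul_of_nonneg_right (C.j_le_j_iff.mpr hxy)
      (C.j_nonneg_iff.mpr (Comp.nonneg (hr i k)))
  calc ∑ i, C.sm (α i) (μ (p i)) = ∑ i, ∑ k, C.sm (α i) (μ (p i ⊓ q k)) := by
        refine Finset.sum_congr rfl fun i _ => ?_
        rw [hμ.1.1.map_eq_sum_inf C.e_nonneg (hp i) hq hqd hqe,
          C.sm_sum_right (C.mem_Linf_of_mem_R (hα i))]
    _ ≤ ∑ i, ∑ k, C.sm (β k) (μ (p i ⊓ q k)) :=
        Finset.sum_le_sum fun i _ => Finset.sum_le_sum fun k _ => hcell i k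
    _ = ∑ k, ∑ i, C.sm (β k) (μ (q k ⊓ p i)) := by
        rw [Finset.sum_comm]
        simp only [inf_comm]
    _ = ∑ k, C.sm (β k) (μ (q k)) := by
        refine Finset.sum_congr rfl fun k _ => ?_
        rw [hμ.1.1.map_eq_sum_inf C.e_nonneg (hq k) hp hpd hpe,
          C.sm_sum_right (C.mem_Linf_of_mem_R (hβ k))]

lemma Imu_eq {μ : E → E} (hμ : μ ∈ C.baT) (hμ0 : ∀ p ∈ Comp C.e, 0 ≤ μ p) {x : E} {n : ℕ}
    {α p : Fin n → E} (hx : C.IsStdRep x n α p) : C.Imu μ x = ∑ i, C.sm (α i) (μ (p i)) := by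
  obtain ⟨m, β, q, hy, hImu⟩ : ∃ (m : ℕ) (β q : Fin m → E), C.IsStdRep x m β q ∧
      C.Imu μ x = ∑ i, C.sm (β i) (μ (q i)) :=
    Classical.epsilon_spec (p := fun v => ∃ (m : ℕ) (β q : Fin m → E), C.IsStdRep x m β q ∧
      v = ∑ i, C.sm (β i) (μ (q i))) ⟨_, n, α, p, hx, rfl⟩
  rw [hImu]
  exact le_antisymm (C.sum_sm_charge_le hμ hμ0 hy hx le_rfl)
    (C.sum_sm_charge_le hμ hμ0 hx hy le_rfl)

lemma Imu_mono {μ : E → E} (hμ : μ ∈ C.baT) (hμ0 : ∀ p ∈ Comp C.e, 0 ≤ μ p) {x y : E}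
    (hx : x ∈ C.Steps) (hy : y ∈ C.Steps) (hxy : x ≤ y) : C.Imu μ x ≤ C.Imu μ y := by
  obtain ⟨n, α, p, hx⟩ := hx
  obtain ⟨m, β, q, hy⟩ := hy
  rw [C.Imu_eq hμ hμ0 hx, C.Imu_eq hμ hμ0 hy]
  exact C.sum_sm_charge_le hμ hμ0 hx hy hxy

lemma Imu_add_of_mem_R {μ : E → E} (hμ : μ ∈ C.baT) (hμ0 : ∀ p ∈ Comp C.e, 0 ≤ μ p) {x : E}
    (hx : x ∈ C.Steps) {a : E} (ha : a ∈ C.R) :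
    C.Imu μ (x + a) = C.Imu μ x + C.sm a (μ C.e) := by
  obtain ⟨n, α, p, hx⟩ := hx
  have ⟨hα, hp, hpd, hpe, _⟩ := hx
  have haL := C.mem_Linf_of_mem_R ha
  rw [C.Imu_eq hμ hμ0 (hx.add_mem_R ha), C.Imu_eq hμ hμ0 hx, ← hpe,
    hμ.1.1.map_sum C.e_nonneg (fun i _ => hp i) (fun i _ k _ h => hpd i k h),
    C.sm_sum_right haL, ← Finset.sum_add_distrib]
  exact Finset.sum_congr rfl fun i _ => C.sm_add_left (C.mem_Linf_of_mem_R (hα i)) haL _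

lemma add_mem_Steps_of_mem_R {x a : E} (hx : x ∈ C.Steps) (ha : a ∈ C.R) : x + a ∈ C.Steps := by
  obtain ⟨n, α, p, hx⟩ := hx
  exact ⟨n, _, p, hx.add_mem_R ha⟩

lemma posPart_mem_Steps {x : E} (hx : x ∈ C.Steps) : x⁺ ∈ C.Steps := by
  obtain ⟨n, α, p, hx⟩ := hx
  exact ⟨n, _, p, hx.posPart⟩

lemma zero_mem_Steps : (0 : E) ∈ C.Steps :=
  ⟨1, fun _ => 0, fun _ => C.e, fun _ => C.zero_mem_R, fun _ => Comp.self C.e_nonneg,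
    fun i k h => absurd (Subsingleton.elim i k) h, by simp, by simp [C.sm_zero_left]⟩

lemma Imu_le_Imu_add_smul {μ : E → E} (hμ : μ ∈ C.baT) (hμ0 : ∀ p ∈ Comp C.e, 0 ≤ μ p)
    {g s u : E} (hg : g ∈ C.Steps) (hs : s ∈ C.Steps) (hu : u ∈ C.R) {c : ℝ}
    (hgs : g ≤ s + c • u) : C.Imu μ g ≤ C.Imu μ s + c • C.sm u (μ C.e) := by
  have hcu : c • u ∈ C.R := C.smul_mem_R c hu
  have h := C.Imu_mono hμ hμ0 hg (C.add_mem_Steps_of_mem_R hs hcu) hgs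
  rwa [C.Imu_add_of_mem_R hμ hμ0 hs hcu, C.sm_smul_left (C.mem_Linf_of_mem_R hu)] at h

lemma abs_intPos_sub_Imu_le {μ : E → E} (hμ : μ ∈ C.baT) (hμ0 : ∀ p ∈ Comp C.e, 0 ≤ μ p)
    {f s u : E} (hf : 0 ≤ f) (hs : s ∈ C.Steps) (hu : u ∈ C.R) {c : ℝ}
    (hfs : |f - s| ≤ c • u) : |C.intPos μ f - C.Imu μ s| ≤ c • C.sm u (μ C.e) := by
  obtain ⟨hfs_le, hsf_le⟩ := abs_le'.mp hfs
  set S := {v | ∃ g ∈ C.Steps, 0 ≤ g ∧ g ≤ f ∧ v = C.Imu μ g}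
  have hS : ∀ v ∈ S, v ≤ C.Imu μ s + c • C.sm u (μ C.e) := by
    rintro _ ⟨g, hg, -, hgf, rfl⟩
    exact C.Imu_le_Imu_add_smul hμ hμ0 hg hs hu (hgf.trans (sub_le_iff_le_add'.mp hfs_le))
  have hupper : C.intPos μ f ≤ C.Imu μ s + c • C.sm u (μ C.e) :=
    csSup_le ⟨_, 0, C.zero_mem_Steps, le_rfl, hf, rfl⟩ hS
  have hlower : C.Imu μ s ≤ C.intPos μ f + c • C.sm u (μ C.e) := by
    have hg : (s - c • u)⁺ ∈ C.Steps := C.posPart_mem_Steps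
      (sub_eq_add_neg s (c • u) ▸ C.add_mem_Steps_of_mem_R hs (C.neg_mem_R (C.smul_mem_R c hu)))
    have hgf : (s - c • u)⁺ ≤ f :=
      sup_le (by rw [neg_sub] at hsf_le; exact sub_le_comm.mp hsf_le) hf
    refine (C.Imu_le_Imu_add_smul hμ hμ0 hs hg hu
      (sub_le_iff_le_add.mp (le_posPart _))).trans (add_le_add_left ?_ _)
    exact le_csSup ⟨_, hS⟩ ⟨_, hg, posPart_nonneg _, hgf, rfl⟩
  exact abs_le'.mpr
    ⟨sub_le_iff_le_add'.mpr hupper, by rw [neg_sub]; exact sub_le_iff_le_add'.mpr hlower⟩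

lemma mul_j_nonneg_of_negPart_inf_eq_zero {x q : E} (hq : 0 ≤ q) (h : x⁻ ⊓ q = 0) :
    0 ≤ C.mul (C.j x) (C.j q) := by
  have hq' := C.j_nonneg_iff.mpr hq
  rw [← posPart_sub_negPart x, map_sub, C.sub_mul, C.mul_eq_zero_of_inf_eq_zero
    (C.j_nonneg_iff.mpr (negPart_nonneg x)) hq' (by rw [← C.j_inf, h, map_zero]), sub_zero]
  exact C.mul_nonneg (C.j_nonneg_iff.mpr (posPart_nonneg x)) hq'

lemma mul_j_nonpos_of_posPart_inf_eq_zero {x q : E} (hq : 0 ≤ q) (h : x⁺ ⊓ q = 0) :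
    C.mul (C.j x) (C.j q) ≤ 0 := by
  have hq' := C.j_nonneg_iff.mpr hq
  rw [← posPart_sub_negPart x, map_sub, C.sub_mul, C.mul_eq_zero_of_inf_eq_zero
    (C.j_nonneg_iff.mpr (posPart_nonneg x)) hq' (by rw [← C.j_inf, h, map_zero]), zero_sub,
    neg_nonpos]
  exact C.mul_nonneg (C.j_nonneg_iff.mpr (negPart_nonneg x)) hq'

def dyadicStep (f h : E) (n : ℕ) : E :=
  ∑ k ∈ Finset.range (2 ^ n), C.sm (((k : ℝ) / 2 ^ n) • h) (dyadicLayer C.e f h n k)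

variable {f h : E}

lemma dyadicStep_eq_sm (hh : h ∈ C.R) (n : ℕ) :
    C.dyadicStep f h n = C.sm h (dyadicStaircase C.e f h n) := by
  have hL := C.mem_Linf_of_mem_R hh
  rw [dyadicStep, dyadicStaircase, C.sm_sum_right hL]
  exact Finset.sum_congr rfl fun k _ => by rw [C.sm_smul_left hL, C.sm_smul_right hL]

lemma dyadicStep_mem_Steps (hf : 0 ≤ f) (hfh : f ≤ h) (hh : h ∈ C.R) (n : ℕ) :
    C.dyadicStep f h n ∈ C.Steps :=
  ⟨2 ^ n, fun k => (((k : ℕ) : ℝ) / 2 ^ n) • h, fun k => dyadicLayer C.e f h n k,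
    fun _ => C.smul_mem_R _ hh, fun k => dyadicLayer_mem_Comp C.e_nonneg (hf.trans hfh) n k,
    fun _ _ hkl => dyadicLayer_inf_eq_zero C.e_nonneg (hf.trans hfh) n (Fin.val_ne_of_ne hkl),
    by rw [Fin.sum_univ_eq_sum_range (dyadicLayer C.e f h n), sum_dyadicLayer C.e_nonneg hfh],
    (Fin.sum_univ_eq_sum_range (fun k => C.sm (((k : ℝ) / 2 ^ n) • h)
      (dyadicLayer C.e f h n k)) _).symm⟩

lemma dyadicStep_nonneg (hf : 0 ≤ f) (hfh : f ≤ h) (hh : h ∈ C.R) (n : ℕ) :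
    0 ≤ C.dyadicStep f h n :=
  Finset.sum_nonneg fun k _ => C.sm_nonneg (C.smul_mem_Linf _ (C.mem_Linf_of_mem_R hh))
    (smul_nonneg (by positivity) (hf.trans hfh))
    (Comp.nonneg (dyadicLayer_mem_Comp C.e_nonneg (hf.trans hfh) n k))

lemma dyadicStep_monotone (hf : 0 ≤ f) (hfh : f ≤ h) (hh : h ∈ C.R) :
    Monotone (C.dyadicStep f h) :=
  monotone_nat_of_le_succ fun n => by
    rw [C.dyadicStep_eq_sm hh, C.dyadicStep_eq_sm hh]
    exact C.sm_le_sm_right (C.mem_Linf_of_mem_R hh) (hf.trans hfh)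
      (dyadicStaircase_le_succ C.e_nonneg (hf.trans hfh) hfh n)

lemma abs_sub_dyadicStep_le (hf : 0 ≤ f) (hfh : f ≤ h) (hh : h ∈ C.R) (n : ℕ) :
    |f - C.dyadicStep f h n| ≤ ((2 : ℝ) ^ n)⁻¹ • h := by
  have hh0 : 0 ≤ h := hf.trans hfh
  set c : ℕ → ℝ := fun k => (k : ℝ) / 2 ^ n
  set Q := dyadicLayer C.e f h n
  have hQ : ∀ k, 0 ≤ Q k := fun k => Comp.nonneg (dyadicLayer_mem_Comp C.e_nonneg hh0 n k)
  have hsum : ∑ k ∈ Finset.range (2 ^ n), Q k = C.e := sum_dyadicLayer C.e_nonneg hfh n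
  -- on the layer `Q k` the difference `f - s_n` equals `f - c k • h`
  have hdiff : C.j (f - C.dyadicStep f h n) =
      ∑ k ∈ Finset.range (2 ^ n), C.mul (C.j (f - c k • h)) (C.j (Q k)) := by
    rw [map_sub, C.eq_sum_mul_of_sum_eq hsum (C.j f), dyadicStep, map_sum,
      ← Finset.sum_sub_distrib]
    refine Finset.sum_congr rfl fun k _ => ?_
    rw [C.j_sm (C.smul_mem_Linf _ (C.mem_Linf_of_mem_R hh)), ← C.sub_mul, map_sub]
  have hlow : ∀ k, 0 ≤ C.mul (C.j (f - c k • h)) (C.j (Q k)) := fun k =>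
    C.mul_j_nonneg_of_negPart_inf_eq_zero (hQ k) (negPart_inf_dyadicLayer C.e_nonneg hf hh0 n k)
  have hup : ∀ k, C.mul (C.j (f - c k • h)) (C.j (Q k)) ≤
      ((2 : ℝ) ^ n)⁻¹ • C.mul (C.j h) (C.j (Q k)) := fun k => by
    have hck : f - c k • h = (f - c (k + 1) • h) + ((2 : ℝ) ^ n)⁻¹ • h := by
      have hc : c (k + 1) = c k + ((2 : ℝ) ^ n)⁻¹ := by simp only [c]; push_cast; ring
      rw [hc, add_smul]
      abel
    rw [hck, map_add, C.add_mul, map_smul, C.smul_mul]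
    exact add_le_of_nonpos_left (C.mul_j_nonpos_of_posPart_inf_eq_zero (hQ k)
      (posPart_inf_dyadicLayer C.e_nonneg hh0 n k))
  have hlow' : 0 ≤ C.j (f - C.dyadicStep f h n) := hdiff ▸ Finset.sum_nonneg fun k _ => hlow k
  have hup' : C.j (f - C.dyadicStep f h n) ≤ C.j (((2 : ℝ) ^ n)⁻¹ • h) := by
    rw [hdiff, map_smul, C.eq_sum_mul_of_sum_eq hsum (C.j h), Finset.smul_sum]
    exact Finset.sum_le_sum fun k _ => (hup k).trans_eq (by rw [C.mul_comm])
  rw [abs_of_nonneg (C.j_nonneg_iff.mp hlow')]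
  exact C.j_le_j_iff.mp hup'

end CRT

/-- Let `(E,e,T)` be a `T`-universally complete conditional Riesz
triple and `μ ∈ ba(T)₊`.  Then (a) for every `f ∈ L^∞(T)₊` and every sequence `(sₙ)`
of positive step functions converging `u`-uniformly to `f` (`u ∈ R(T)₊`), the
sequence `(I_μ(sₙ))` converges `(u·μ(e))`-uniformly to `∫ f dμ`; and (b) for every
`f ∈ L^∞(T)₊` there exist `u ∈ R(T)₊` and an increasing sequence of positive step
functions converging `u`-uniformly to `f`. -/
theorem integral_approximation_by_steps {E : Type u} {G : Type v}
    [ConditionallyCompleteLattice E] [AddCommGroup E] [Module ℝ E]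
    [CovariantClass E E (· + ·) (· ≤ ·)] [PosSMulMono ℝ E]
    [ConditionallyCompleteLattice G] [AddCommGroup G] [Module ℝ G]
    [CovariantClass G G (· + ·) (· ≤ ·)] [PosSMulMono ℝ G]
    (C : CRT E G) (μ : E → E) (hμ : μ ∈ C.baT)
    (hpos : ∀ p ∈ Comp C.e, 0 ≤ μ p) :
    -- (a)
    (∀ f ∈ C.Linf, 0 ≤ f → ∀ u ∈ C.R, 0 ≤ u →
      ∀ s : ℕ → E, (∀ n, s n ∈ C.Steps ∧ 0 ≤ s n) → UnifConv u s f →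
        UnifConv (C.sm u (μ C.e)) (fun n => C.Imu μ (s n)) (C.intPos μ f)) ∧
    -- (b)
    (∀ f ∈ C.Linf, 0 ≤ f → ∃ u ∈ C.R, 0 ≤ u ∧
      ∃ s : ℕ → E, (∀ n, s n ∈ C.Steps ∧ 0 ≤ s n) ∧ Monotone s ∧ UnifConv u s f) := by
  refine ⟨fun f _ hf u hu _ s hs hsf => ?_, fun f hf hf0 => ?_⟩
  · obtain ⟨ε, hε_anti, hε_lim, hε⟩ := hsf
    exact ⟨ε, hε_anti, hε_lim, fun n => C.abs_intPos_sub_Imu_le hμ hpos hf (hs n).1 hu (hε n)⟩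
  · obtain ⟨h, hh, hh0, hfh⟩ := hf
    have hfh' : f ≤ h := (le_abs_self f).trans hfh
    refine ⟨h, hh, hh0, C.dyadicStep f h,
      fun n => ⟨C.dyadicStep_mem_Steps hf0 hfh' hh n, C.dyadicStep_nonneg hf0 hfh' hh n⟩,
      C.dyadicStep_monotone hf0 hfh' hh, fun n => ((2 : ℝ) ^ n)⁻¹, ?_, ?_,
      C.abs_sub_dyadicStep_le hf0 hfh' hh⟩
    · exact fun a b hab => inv_anti₀ (by positivity) (pow_le_pow_right₀ one_le_two hab)
    · exact tendsto_inv_atTop_zero.comp (tendsto_pow_atTop_atTop_of_one_lt one_lt_two)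

end RieszPaper

end
end

section
/- Let E be a Riesz space with the principal projection property, D ⊆ E a sequentially order closed Riesz subspace, and f ∈ D. Denote by B_{f,E} ⊆ E and B_{f,D} ⊆ D the principal bands generated by f in E and in D, respectively, with band projections P_{f,E} : E → B_{f,E} and P_{f,D} : D → B_{f,D}. Then: (a) the restriction of P_{f,E} to D equals P_{f,D}; and (b) B_{f,E} ∩ D = B_{f,D}. -/
open scoped Classical

noncomputable section

namespace RieszPaper

universe u v w

/-- Let `E` be a Riesz space with the principal projection property,
`D ⊆ E` a sequentially order closed Riesz subspace and `f ∈ D`.  Then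
(a) the band projection `P_{f,E}` restricted to `D` equals the band projection
`P_{f,D}` computed in `D` (for positive `g ∈ D`, the `E`-supremum of the chain
`g ⊓ n|f|` lies in `D` and is also its least upper bound within `D`), and
(b) `B_{f,E} ∩ D = B_{f,D}` (membership in the principal band generated by `f`,
characterised by `|g| ⊓ n|f| ↑ |g|`, is the same computed in `E` or in `D`). -/
theorem bandProjection_subspace_restriction {E : Type u}
    [Lattice E] [AddCommGroup E] [Module ℝ E]
    [CovariantClass E E (· + ·) (· ≤ ·)] [PosSMulMono ℝ E]
    (hppp : HasPPP E) (D : Set E)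
    (hD0 : (0 : E) ∈ D)
    (hDadd : ∀ x ∈ D, ∀ y ∈ D, x + y ∈ D)
    (hDsmul : ∀ (r : ℝ), ∀ x ∈ D, r • x ∈ D)
    (hDsup : ∀ x ∈ D, ∀ y ∈ D, x ⊔ y ∈ D)
    (hDclosed : SeqOrderClosed D)
    (f : E) (hf : f ∈ D) :
    (∀ g ∈ D, 0 ≤ g →
      projP f g ∈ D ∧
      projP f g ∈ upperBounds (projChain f g) ∧
      (∀ b ∈ D, b ∈ upperBounds (projChain f g) → projP f g ≤ b)) ∧
    (∀ g ∈ D, proj f g ∈ D) ∧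
    (∀ g ∈ D,
      (IsLUB (projChain f |g|) |g| ↔
        (|g| ∈ upperBounds (projChain f |g|) ∧
          ∀ b ∈ D, b ∈ upperBounds (projChain f |g|) → |g| ≤ b))) := by
  have hneg : ∀ x ∈ D, -x ∈ D := fun x hx => by
    simpa using hDsmul (-1) x hx
  have hinf : ∀ x ∈ D, ∀ y ∈ D, x ⊓ y ∈ D := by
    intro x hx y hy
    have h := hneg _ (hDsup _ (hneg _ hx) _ (hneg _ hy))
    simpa [neg_sup, neg_neg] using h
  have habs : ∀ x ∈ D, |x| ∈ D := fun x hx => by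
    have := hDsup x hx _ (hneg x hx)
    simpa [abs] using this
  have hnsmul : ∀ (n : ℕ), ∀ x ∈ D, n • x ∈ D := by
    intro n x hx
    induction n with
    | zero => simpa using hD0
    | succ n ih => rw [succ_nsmul]; exact hDadd _ ih _ hx
  have hchain : ∀ g : E, projChain f g = Set.range (fun n : ℕ => g ⊓ n • |f|) := by
    intro g; ext y; simp [projChain, Set.range, eq_comm]
  have hLUBmem : ∀ g ∈ D, ∀ s : E, IsLUB (projChain f g) s → s ∈ D := by
    intro g hg s hs
    refine hDclosed.1 (fun n => g ⊓ n • |f|) s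
      (fun n => hinf _ hg _ (hnsmul n _ (habs f hf))) ?_ ?_
    · intro n m hnm
      exact inf_le_inf_left g (nsmul_le_nsmul_left (abs_nonneg f) hnm)
    · rw [← hchain g]; exact hs
  have hproj : ∀ g : E, 0 ≤ g → IsLUB (projChain f g) (projP f g) := by
    intro g hg
    rw [projP, dif_pos (hppp f g hg)]
    exact (hppp f g hg).choose_spec
  have part1 : ∀ g ∈ D, 0 ≤ g →
      projP f g ∈ D ∧
      projP f g ∈ upperBounds (projChain f g) ∧
      (∀ b ∈ D, b ∈ upperBounds (projChain f g) → projP f g ≤ b) := by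
    intro g hg hgpos
    have hs := hproj g hgpos
    exact ⟨hLUBmem g hg _ hs, hs.1, fun b _ hb => hs.2 hb⟩
  refine ⟨part1, ?_, ?_⟩
  · intro g hg
    have h1 : rpos g ∈ D := hDsup g hg 0 hD0
    have h2 : rpos (-g) ∈ D := hDsup _ (hneg g hg) 0 hD0
    have p1 := (part1 _ h1 le_sup_right).1
    have p2 := (part1 _ h2 le_sup_right).1
    have : projP f (rpos g) + -(projP f (rpos (-g))) ∈ D :=
      hDadd _ p1 _ (hneg _ p2)
    simpa [proj, sub_eq_add_neg] using this
  · intro g hg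
    constructor
    · intro h
      exact ⟨h.1, fun b _ hb => h.2 hb⟩
    · rintro ⟨hub, hle⟩
      obtain ⟨s, hs⟩ := hppp f |g| (abs_nonneg g)
      have hsD : s ∈ D := hLUBmem |g| (habs g hg) s hs
      have h1 : s ≤ |g| := hs.2 hub
      have h2 : |g| ≤ s := hle s hsD hs.1
      have : s = |g| := le_antisymm h1 h2
      rwa [this] at hs

end RieszPaper

end
end
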